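/- arXiv:2104.01470 — 8 statements merged into one kernel-verified Lean document; each statement's English description precedes it below -/
import Mathlib

section
/- Let 0 < μ < 1/m_φ (any μ > 0 if m_φ = 0). Then for every z ∈ ℝⁿ one has F(x_{μφ}(z)) ≤ F_μ(z) ≤ F(x_{μg}(z)), i.e., the smooth approximation F_μ is bounded below by F composed with the proximal mapping of φ and bounded above by F composed with the proximal mapping of g. -/
open scoped RealInnerProductSpace

noncomputable section

/-- `ℝⁿ` with the Euclidean norm. -/
abbrev En (n : ℕ) := EuclideanSpace ℝ (Fin n)

/-- `φ` is proper: finite somewhere and never `⊥`. -/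
def ProperE {n : ℕ} (φ : En n → EReal) : Prop :=
  (∃ x, φ x ≠ ⊤) ∧ ∀ x, φ x ≠ ⊥

/-- `φ` is `m`-weakly convex: `x ↦ φ x + (m/2)‖x‖²` is convex. -/
def WeaklyConvexOn {n : ℕ} (φ : En n → EReal) (m : ℝ) : Prop :=
  ∀ x y : En n, ∀ a b : ℝ, 0 ≤ a → 0 ≤ b → a + b = 1 →
    φ (a • x + b • y) + (((m / 2) * ‖a • x + b • y‖ ^ 2 : ℝ) : EReal) ≤
      (a : EReal) * (φ x + (((m / 2) * ‖x‖ ^ 2 : ℝ) : EReal)) +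
        (b : EReal) * (φ y + (((m / 2) * ‖y‖ ^ 2 : ℝ) : EReal))

/-- `Mφ` is the Moreau envelope of `φ` with parameter `μ` and `xφ` the associated
(unique) proximal mapping: for every `z`, `xφ z` is the unique minimizer of
`x ↦ φ x + ‖x - z‖²/(2μ)` and `Mφ z` is the minimal value. -/
def IsMoreau {n : ℕ} (φ : En n → EReal) (μ : ℝ) (Mφ : En n → ℝ) (xφ : En n → En n) : Prop :=
  ∀ z : En n,
    (Mφ z : EReal) = φ (xφ z) + ((‖xφ z - z‖ ^ 2 / (2 * μ) : ℝ) : EReal) ∧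
    (∀ x, (Mφ z : EReal) ≤ φ x + ((‖x - z‖ ^ 2 / (2 * μ) : ℝ) : EReal)) ∧
    (∀ x, φ x + ((‖x - z‖ ^ 2 / (2 * μ) : ℝ) : EReal) = (Mφ z : EReal) → x = xφ z)

/-- Real-valued version, for the convex function `g`. -/
def IsMoreauR {n : ℕ} (g : En n → ℝ) (μ : ℝ) (Mg : En n → ℝ) (xg : En n → En n) : Prop :=
  ∀ z : En n,
    Mg z = g (xg z) + ‖xg z - z‖ ^ 2 / (2 * μ) ∧
    (∀ x, Mg z ≤ g x + ‖x - z‖ ^ 2 / (2 * μ)) ∧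
    (∀ x, g x + ‖x - z‖ ^ 2 / (2 * μ) = Mg z → x = xg z)

/-- for `0 < μ < 1/m_φ`, `F ∘ x_{μφ} ≤ F_μ ≤ F ∘ x_{μg}`
where `F = φ - g` and `F_μ = M_{μφ} - M_{μg}`. -/
theorem stmt0 {n : ℕ} (φ : En n → EReal) (g : En n → ℝ) (mφ μ : ℝ)
    (hproper : ProperE φ) (hlsc : LowerSemicontinuous φ)
    (hmφ : 0 ≤ mφ) (hweak : WeaklyConvexOn φ mφ)
    (hg : ConvexOn ℝ Set.univ g)
    (hμ : 0 < μ) (hμm : μ * mφ < 1)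
    (Mφ : En n → ℝ) (xφ : En n → En n) (hφprox : IsMoreau φ μ Mφ xφ)
    (Mg : En n → ℝ) (xg : En n → En n) (hgprox : IsMoreauR g μ Mg xg) :
    ∀ z : En n,
      φ (xφ z) - ((g (xφ z) : ℝ) : EReal) ≤ ((Mφ z - Mg z : ℝ) : EReal) ∧
      ((Mφ z - Mg z : ℝ) : EReal) ≤ φ (xg z) - ((g (xg z) : ℝ) : EReal) := by
  intro z
  obtain ⟨hφeq, hφmin, -⟩ := hφprox z
  obtain ⟨hgeq, hgmin, -⟩ := hgprox z
  constructor
  · -- φ (xφ z) is finite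
    have hnebot : φ (xφ z) ≠ ⊥ := hproper.2 _
    have hnetop : φ (xφ z) ≠ ⊤ := by
      intro h
      rw [h] at hφeq
      simp [EReal.top_add_of_ne_bot] at hφeq
    lift φ (xφ z) to ℝ using ⟨hnetop, hnebot⟩ with r hr
    have hr' : Mφ z = r + ‖xφ z - z‖ ^ 2 / (2 * μ) := by
      exact_mod_cast hφeq
    have h2 : Mg z ≤ g (xφ z) + ‖xφ z - z‖ ^ 2 / (2 * μ) := hgmin _
    have : r - g (xφ z) ≤ Mφ z - Mg z := by linarith
    rw [← EReal.coe_sub]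
    exact_mod_cast this
  · have h1 : (Mφ z : EReal) ≤ φ (xg z) + ((‖xg z - z‖ ^ 2 / (2 * μ) : ℝ) : EReal) :=
      hφmin _
    have key : ((Mφ z - Mg z : ℝ) : EReal) =
        ((Mφ z : ℝ) : EReal) - ((‖xg z - z‖ ^ 2 / (2 * μ) : ℝ) : EReal)
          - ((g (xg z) : ℝ) : EReal) := by
      rw [← EReal.coe_sub, ← EReal.coe_sub]
      norm_cast
      rw [hgeq]; ring
    rw [key]
    refine EReal.sub_le_sub ?_ le_rfl
    calc ((Mφ z : ℝ) : EReal) - ((‖xg z - z‖ ^ 2 / (2 * μ) : ℝ) : EReal)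
        ≤ (φ (xg z) + ((‖xg z - z‖ ^ 2 / (2 * μ) : ℝ) : EReal))
            - ((‖xg z - z‖ ^ 2 / (2 * μ) : ℝ) : EReal) :=
          EReal.sub_le_sub h1 le_rfl
      _ = φ (xg z) := by
          rw [EReal.add_sub_cancel_right]
end
end

section
/- Let 0 < μ < 1/m_φ. Then F_μ = M_{μφ} − M_{μg} is differentiable on ℝⁿ with ∇F_μ(z) = (x_{μg}(z) − x_{μφ}(z))/μ, and ∇F_μ is Lipschitz continuous with modulus L_{F_μ} = (2 − μ m_φ)/(μ − μ² m_φ). -/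
open scoped RealInnerProductSpace

noncomputable section

/-!
Weak convexity of `φ` makes the proximal objective `x ↦ φ x + ‖x - z‖² / (2μ)` strongly convex
with modulus `1/μ - m`; comparing it with points of the segment from `x` to the minimiser
`xφ z` and letting them tend to `xφ z` gives quadratic growth around `xφ z`. Adding the growth
inequalities at two centres shows that the proximal map is `(1 - μ m)`-comonotone, hence
`(1 - μ m)⁻¹`-Lipschitz. The envelope lies below the quadratic
`w ↦ Mφ z + ⟪(z - xφ z)/μ, w - z⟫ + ‖w - z‖²/(2μ)`, and the same inequality with `z` and `w`
swapped, together with the Lipschitz bound, gives a matching quadratic from below, so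
`∇Mφ z = (z - xφ z)/μ`. The convex `g` is the case `m = 0`, and the triangle inequality gives
the constant `μ⁻¹ (1 + (1 - μ m)⁻¹) = (2 - μ m)/(μ - μ² m)`.
-/

open Filter Topology

theorem le_of_forall_mem_Ico_mul_le {c d : ℝ} (h : ∀ t ∈ Set.Ico (0 : ℝ) 1, t * c ≤ d) :
    c ≤ d := by
  have hlim : Tendsto (fun t : ℝ => t * c) (𝓝[<] 1) (𝓝 c) := by
    simpa using ((continuous_mul_const c).tendsto 1).mono_left nhdsWithin_le_nhds
  refine le_of_tendsto hlim ?_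
  filter_upwards [Ico_mem_nhdsLT (zero_lt_one' ℝ)] with t ht using h t ht

section InnerProductSpace

variable {E : Type*} [NormedAddCommGroup E] [InnerProductSpace ℝ E]

theorem norm_smul_add_smul_sq {a b : ℝ} (hab : a + b = 1) (x y : E) :
    ‖a • x + b • y‖ ^ 2 = a * ‖x‖ ^ 2 + b * ‖y‖ ^ 2 - a * b * ‖x - y‖ ^ 2 := by
  rw [norm_add_sq_real, norm_sub_sq_real, norm_smul, norm_smul, real_inner_smul_left,
    real_inner_smul_right, Real.norm_eq_abs, Real.norm_eq_abs, mul_pow, mul_pow, sq_abs, sq_abs]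
  obtain rfl := eq_sub_of_add_eq hab
  ring

variable [CompleteSpace E]

theorem HasGradientAt.sub {f g : E → ℝ} {f' g' x : E} (hf : HasGradientAt f f' x)
    (hg : HasGradientAt g g' x) : HasGradientAt (fun w => f w - g w) (f' - g') x := by
  rw [hasGradientAt_iff_hasFDerivAt] at hf hg ⊢
  rw [map_sub]
  exact hf.sub hg

theorem hasGradientAt_of_le_of_le {f : E → ℝ} {v z : E} {a b : ℝ}
    (hlow : ∀ w, f z + ⟪v, w - z⟫ - a * ‖w - z‖ ^ 2 ≤ f w)
    (hup : ∀ w, f w ≤ f z + ⟪v, w - z⟫ + b * ‖w - z‖ ^ 2) :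
    HasGradientAt f v z := by
  rw [hasGradientAt_iff_isLittleO]
  refine Asymptotics.IsBigO.trans_isLittleO ?_ (Asymptotics.isLittleO_pow_sub_sub z one_lt_two)
  refine Asymptotics.IsBigO.of_bound (max a b) (Eventually.of_forall fun w => ?_)
  have hsq : 0 ≤ ‖w - z‖ ^ 2 := by positivity
  rw [Real.norm_eq_abs, Real.norm_eq_abs, abs_of_nonneg hsq, abs_le]
  constructor <;> nlinarith [hlow w, hup w, le_max_left a b, le_max_right a b]

end InnerProductSpace

namespace IsMoreau

variable {n : ℕ} {φ : En n → EReal} {m μ : ℝ} {Mφ : En n → ℝ} {xφ : En n → En n}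

theorem apply_prox (h : IsMoreau φ μ Mφ xφ) (z : En n) :
    φ (xφ z) = ((Mφ z - ‖xφ z - z‖ ^ 2 / (2 * μ) : ℝ) : EReal) := by
  have hz := (h z).1
  induction hφ : φ (xφ z) using EReal.rec with
  | bot => simp [hφ] at hz
  | top => simp [hφ] at hz
  | coe r =>
    rw [hφ] at hz
    norm_cast at hz ⊢
    linarith

theorem add_le_of_apply_add_le (h : IsMoreau φ μ Mφ xφ) {z q : En n} {a R : ℝ}
    (hq : φ q + (a : EReal) ≤ R) :
    Mφ z + a ≤ R + ‖q - z‖ ^ 2 / (2 * μ) := by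
  have hE : ((Mφ z : ℝ) : EReal) + a ≤ (R : EReal) + ((‖q - z‖ ^ 2 / (2 * μ) : ℝ) : EReal) :=
    calc ((Mφ z : ℝ) : EReal) + a
        ≤ φ q + ((‖q - z‖ ^ 2 / (2 * μ) : ℝ) : EReal) + a := by gcongr; exact (h z).2.1 q
      _ = φ q + a + ((‖q - z‖ ^ 2 / (2 * μ) : ℝ) : EReal) := add_right_comm _ _ _
      _ ≤ R + ((‖q - z‖ ^ 2 / (2 * μ) : ℝ) : EReal) := by gcongr
  exact_mod_cast hE

theorem add_sq_norm_sub_prox_le (h : IsMoreau φ μ Mφ xφ) (hweak : WeaklyConvexOn φ m)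
    (z x : En n) {r : ℝ} (hx : φ x = r) :
    Mφ z + (1 / μ - m) / 2 * ‖x - xφ z‖ ^ 2 ≤ r + ‖x - z‖ ^ 2 / (2 * μ) := by
  set p := xφ z
  suffices ∀ t ∈ Set.Ico (0 : ℝ) 1,
      t * ((1 / μ - m) / 2 * ‖x - p‖ ^ 2) ≤ r + ‖x - z‖ ^ 2 / (2 * μ) - Mφ z by
    linarith [le_of_forall_mem_Ico_mul_le this]
  rintro t ⟨ht0, ht1⟩
  set q := (1 - t) • x + t • p
  have hconv : φ q + ((m / 2 * ‖q‖ ^ 2 : ℝ) : EReal) ≤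
      (((1 - t) * (r + m / 2 * ‖x‖ ^ 2) +
        t * (Mφ z - ‖p - z‖ ^ 2 / (2 * μ) + m / 2 * ‖p‖ ^ 2) : ℝ) : EReal) := by
    have hw := hweak x p (1 - t) t (by linarith) ht0 (by ring)
    rw [hx, h.apply_prox z] at hw
    exact hw.trans_eq (by norm_cast)
  have hmin := h.add_le_of_apply_add_le (z := z) hconv
  have hq := norm_smul_add_smul_sq (sub_add_cancel 1 t) x p
  have hqz : ‖q - z‖ ^ 2 =
      (1 - t) * ‖x - z‖ ^ 2 + t * ‖p - z‖ ^ 2 - (1 - t) * t * ‖x - p‖ ^ 2 := by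
    have : q - z = (1 - t) • (x - z) + t • (p - z) := by module
    rw [this, norm_smul_add_smul_sq (sub_add_cancel 1 t), sub_sub_sub_cancel_right]
  have hscaled : (1 - t) * (t * ((1 / μ - m) / 2 * ‖x - p‖ ^ 2)) ≤
      (1 - t) * (r + ‖x - z‖ ^ 2 / (2 * μ) - Mφ z) := by
    rw [hq, hqz] at hmin
    linear_combination hmin
  exact le_of_mul_le_mul_left hscaled (sub_pos.2 ht1)

theorem mul_norm_sub_sq_le_inner (h : IsMoreau φ μ Mφ xφ) (hweak : WeaklyConvexOn φ m)
    (hμ : 0 < μ) (z₁ z₂ : En n) :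
    (1 - μ * m) * ‖xφ z₁ - xφ z₂‖ ^ 2 ≤ ⟪xφ z₁ - xφ z₂, z₁ - z₂⟫ := by
  have h₁ := h.add_sq_norm_sub_prox_le hweak z₁ (xφ z₂) (h.apply_prox z₂)
  have h₂ := h.add_sq_norm_sub_prox_le hweak z₂ (xφ z₁) (h.apply_prox z₁)
  rw [norm_sub_rev (xφ z₂)] at h₁
  have hpolar : ‖xφ z₂ - z₁‖ ^ 2 + ‖xφ z₁ - z₂‖ ^ 2 - ‖xφ z₂ - z₂‖ ^ 2 - ‖xφ z₁ - z₁‖ ^ 2 =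
      2 * ⟪xφ z₁ - xφ z₂, z₁ - z₂⟫ := by
    simp only [norm_sub_sq_real, inner_sub_left, inner_sub_right, real_inner_comm]
    ring
  have hsum : (1 / μ - m) * ‖xφ z₁ - xφ z₂‖ ^ 2 ≤ μ⁻¹ * ⟪xφ z₁ - xφ z₂, z₁ - z₂⟫ := by
    linear_combination h₁ + h₂ + hpolar / (2 * μ)
  calc (1 - μ * m) * ‖xφ z₁ - xφ z₂‖ ^ 2 = μ * ((1 / μ - m) * ‖xφ z₁ - xφ z₂‖ ^ 2) := by
        field_simp
    _ ≤ μ * (μ⁻¹ * ⟪xφ z₁ - xφ z₂, z₁ - z₂⟫) := by gcongr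
    _ = ⟪xφ z₁ - xφ z₂, z₁ - z₂⟫ := by field_simp

theorem norm_sub_le (h : IsMoreau φ μ Mφ xφ) (hweak : WeaklyConvexOn φ m) (hμ : 0 < μ)
    (hμm : μ * m < 1) (z₁ z₂ : En n) :
    ‖xφ z₁ - xφ z₂‖ ≤ (1 - μ * m)⁻¹ * ‖z₁ - z₂‖ := by
  rw [← div_eq_inv_mul, le_div_iff₀ (by linarith)]
  rcases (norm_nonneg (xφ z₁ - xφ z₂)).eq_or_lt with hd | hd
  · rw [← hd, zero_mul]
    exact norm_nonneg _
  · refine le_of_mul_le_mul_left ?_ hd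
    linear_combination h.mul_norm_sub_sq_le_inner hweak hμ z₁ z₂ +
      real_inner_le_norm (xφ z₁ - xφ z₂) (z₁ - z₂)

theorem le_add_inner_add (h : IsMoreau φ μ Mφ xφ) (z w : En n) :
    Mφ w ≤ Mφ z + ⟪μ⁻¹ • (z - xφ z), w - z⟫ + (2 * μ)⁻¹ * ‖w - z‖ ^ 2 := by
  have hmin := (h w).2.1 (xφ z)
  rw [h.apply_prox z] at hmin
  have hle : Mφ w ≤ Mφ z - ‖xφ z - z‖ ^ 2 / (2 * μ) + ‖xφ z - w‖ ^ 2 / (2 * μ) := by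
    exact_mod_cast hmin
  have hexp : ‖xφ z - w‖ ^ 2 = ‖xφ z - z‖ ^ 2 + 2 * ⟪z - xφ z, w - z⟫ + ‖w - z‖ ^ 2 := by
    rw [show xφ z - w = (xφ z - z) - (w - z) by abel, norm_sub_sq_real,
      show xφ z - z = -(z - xφ z) by abel, inner_neg_left, norm_neg]
    ring
  rw [real_inner_smul_left]
  linear_combination hle + hexp / (2 * μ)

theorem add_inner_sub_le (h : IsMoreau φ μ Mφ xφ) (hweak : WeaklyConvexOn φ m) (hμ : 0 < μ)
    (hμm : μ * m < 1) (z w : En n) :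
    Mφ z + ⟪μ⁻¹ • (z - xφ z), w - z⟫ - (μ * (1 - μ * m))⁻¹ * ‖w - z‖ ^ 2 ≤ Mφ w := by
  have hup := h.le_add_inner_add w z
  have hsplit : ⟪w - xφ w, z - w⟫ =
      ⟪xφ w - xφ z, w - z⟫ - ⟪z - xφ z, w - z⟫ - ‖w - z‖ ^ 2 := by
    rw [show z - w = -(w - z) by abel, inner_neg_right, ← inner_neg_left,
      ← real_inner_self_eq_norm_sq, ← inner_sub_left, ← inner_sub_left]
    congr 1
    abel
  have hprox : ⟪xφ w - xφ z, w - z⟫ ≤ (1 - μ * m)⁻¹ * ‖w - z‖ ^ 2 :=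
    calc ⟪xφ w - xφ z, w - z⟫ ≤ ‖xφ w - xφ z‖ * ‖w - z‖ := real_inner_le_norm _ _
      _ ≤ (1 - μ * m)⁻¹ * ‖w - z‖ * ‖w - z‖ := by
        gcongr
        exact h.norm_sub_le hweak hμ hμm w z
      _ = (1 - μ * m)⁻¹ * ‖w - z‖ ^ 2 := by ring
  have hquad : 0 ≤ (2 * μ)⁻¹ * ‖w - z‖ ^ 2 := by positivity
  rw [real_inner_smul_left, norm_sub_rev z] at hup
  rw [real_inner_smul_left, mul_inv]
  linear_combination hup + μ⁻¹ * hsplit + μ⁻¹ * hprox + hquad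

theorem hasGradientAt (h : IsMoreau φ μ Mφ xφ) (hweak : WeaklyConvexOn φ m) (hμ : 0 < μ)
    (hμm : μ * m < 1) (z : En n) :
    HasGradientAt Mφ (μ⁻¹ • (z - xφ z)) z :=
  hasGradientAt_of_le_of_le (h.add_inner_sub_le hweak hμ hμm z) (h.le_add_inner_add z)

end IsMoreau

theorem IsMoreauR.isMoreau_coe {n : ℕ} {g : En n → ℝ} {μ : ℝ} {Mg : En n → ℝ}
    {xg : En n → En n} (h : IsMoreauR g μ Mg xg) :
    IsMoreau (fun x => (g x : EReal)) μ Mg xg := by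
  intro z
  obtain ⟨heq, hle, huniq⟩ := h z
  beta_reduce
  refine ⟨by exact_mod_cast heq, fun x => by exact_mod_cast hle x,
    fun x hx => huniq x (by exact_mod_cast hx)⟩

theorem ConvexOn.weaklyConvexOn_coe {n : ℕ} {g : En n → ℝ} (hg : ConvexOn ℝ Set.univ g) :
    WeaklyConvexOn (fun x => (g x : EReal)) 0 := by
  intro x y a b ha hb hab
  simp only [zero_div, zero_mul, EReal.coe_zero, add_zero]
  exact_mod_cast hg.2 (Set.mem_univ x) (Set.mem_univ y) ha hb hab

theorem stmt4_general {n : ℕ} (φ : En n → EReal) (g : En n → ℝ) (mφ μ : ℝ)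
    (hweak : WeaklyConvexOn φ mφ)
    (hg : ConvexOn ℝ Set.univ g)
    (hμ : 0 < μ) (hμm : μ * mφ < 1)
    (Mφ : En n → ℝ) (xφ : En n → En n) (hφprox : IsMoreau φ μ Mφ xφ)
    (Mg : En n → ℝ) (xg : En n → En n) (hgprox : IsMoreauR g μ Mg xg) :
    (∀ z : En n, HasGradientAt (fun w => Mφ w - Mg w) (μ⁻¹ • (xg z - xφ z)) z) ∧
    (∀ z₁ z₂ : En n,
      ‖μ⁻¹ • (xg z₁ - xφ z₁) - μ⁻¹ • (xg z₂ - xφ z₂)‖ ≤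
        (2 - μ * mφ) / (μ - μ ^ 2 * mφ) * ‖z₁ - z₂‖) := by
  have hgprox' := hgprox.isMoreau_coe
  have hgweak := hg.weaklyConvexOn_coe
  have hμ0 : μ * 0 < 1 := by simp
  refine ⟨fun z => ?_, fun z₁ z₂ => ?_⟩
  · have hgrad := (hφprox.hasGradientAt hweak hμ hμm z).sub
      (hgprox'.hasGradientAt hgweak hμ hμ0 z)
    rwa [← smul_sub, sub_sub_sub_cancel_left] at hgrad
  · have hφlip := hφprox.norm_sub_le hweak hμ hμm z₁ z₂
    have hglip := hgprox'.norm_sub_le hgweak hμ hμ0 z₁ z₂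
    rw [mul_zero, sub_zero, inv_one, one_mul] at hglip
    calc ‖μ⁻¹ • (xg z₁ - xφ z₁) - μ⁻¹ • (xg z₂ - xφ z₂)‖
        = μ⁻¹ * ‖(xg z₁ - xg z₂) - (xφ z₁ - xφ z₂)‖ := by
          rw [← smul_sub, norm_smul, Real.norm_of_nonneg (by positivity)]
          congr 2
          abel
      _ ≤ μ⁻¹ * (‖z₁ - z₂‖ + (1 - μ * mφ)⁻¹ * ‖z₁ - z₂‖) := by
          gcongr
          exact (norm_sub_le _ _).trans (add_le_add hglip hφlip)
      _ = (2 - μ * mφ) / (μ - μ ^ 2 * mφ) * ‖z₁ - z₂‖ := by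
          have : 1 - μ * mφ ≠ 0 := by linarith
          field_simp
          ring

/-- `F_μ = M_{μφ} - M_{μg}` is differentiable with
`∇F_μ(z) = (x_{μg}(z) - x_{μφ}(z))/μ`, and `∇F_μ` is Lipschitz with modulus
`(2 - μ m_φ)/(μ - μ² m_φ)`. -/
theorem stmt4 {n : ℕ} (φ : En n → EReal) (g : En n → ℝ) (mφ μ : ℝ)
    (hproper : ProperE φ) (hlsc : LowerSemicontinuous φ)
    (hmφ : 0 ≤ mφ) (hweak : WeaklyConvexOn φ mφ)
    (hg : ConvexOn ℝ Set.univ g)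
    (hμ : 0 < μ) (hμm : μ * mφ < 1)
    (Mφ : En n → ℝ) (xφ : En n → En n) (hφprox : IsMoreau φ μ Mφ xφ)
    (Mg : En n → ℝ) (xg : En n → En n) (hgprox : IsMoreauR g μ Mg xg) :
    (∀ z : En n, HasGradientAt (fun w => Mφ w - Mg w) (μ⁻¹ • (xg z - xφ z)) z) ∧
    (∀ z₁ z₂ : En n,
      ‖μ⁻¹ • (xg z₁ - xφ z₁) - μ⁻¹ • (xg z₂ - xφ z₂)‖ ≤
        (2 - μ * mφ) / (μ - μ ^ 2 * mφ) * ‖z₁ - z₂‖) :=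
  stmt4_general φ g mφ μ hweak hg hμ hμm Mφ xφ hφprox Mg xg hgprox
end
end

section
/- Let 0 < μ < 1/m_φ and assume F attains a finite minimal value F*. If z ∈ ℝⁿ satisfies ∇F_μ(z) = 0, i.e., x_{μφ}(z) = x_{μg}(z) =: x̄, then x̄ is a stationary point of F with (z − x̄)/μ ∈ ∂φ(x̄) ∩ ∂g(x̄) and F(x̄) = F_μ(z). Conversely, if x̄ ∈ ℝⁿ is a stationary point of F with common subgradient ξ ∈ ∂φ(x̄) ∩ ∂g(x̄), then z := x̄ + μξ satisfies ∇F_μ(z) = 0, x̄ = x_{μφ}(z) = x_{μg}(z), and F_μ(z) = F(x̄). -/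
open scoped RealInnerProductSpace

noncomputable section

/-- `ξ ∈ ∂g(x)` for a (finite-valued) convex function `g`. -/
def ConvexSubgradAt {n : ℕ} (g : En n → ℝ) (ξ x : En n) : Prop :=
  ∀ y, g x + ⟪ξ, y - x⟫ ≤ g y

/-- `ξ ∈ ∂φ(x)` for an `m`-weakly convex `φ`: `ξ + m x` is a subgradient of the
convex function `φ + (m/2)‖·‖²` at `x`. -/
def WeakSubgradAt {n : ℕ} (φ : En n → EReal) (m : ℝ) (ξ x : En n) : Prop :=
  ∀ y, φ x + (((m / 2) * ‖x‖ ^ 2 + ⟪ξ + m • x, y - x⟫ : ℝ) : EReal) ≤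
    φ y + (((m / 2) * ‖y‖ ^ 2 : ℝ) : EReal)

private lemma tto0 {A B C : ℝ} (h : ∀ t : ℝ, 0 < t → t ≤ 1 → A ≤ B + t * C) : A ≤ B := by
  rcases le_or_gt C 0 with hC | hC
  · have := h 1 one_pos le_rfl
    nlinarith
  · refine le_of_forall_pos_le_add fun ε hε => ?_
    have htpos : 0 < min 1 (ε / C) := lt_min one_pos (div_pos hε hC)
    have h1 := h _ htpos (min_le_left _ _)
    have h2 : min 1 (ε / C) * C ≤ ε :=
      calc min 1 (ε / C) * C ≤ (ε / C) * C :=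
            mul_le_mul_of_nonneg_right (min_le_right _ _) hC.le
        _ = ε := div_mul_cancel₀ ε hC.ne'
    linarith

private lemma ereal_add_coe_eq_coe {a : EReal} {r s : ℝ} (h : a + (r : ℝ) = (s : ℝ)) :
    a = ((s - r : ℝ) : EReal) := by
  induction a using EReal.rec with
  | bot => simp at h
  | coe x => norm_cast at h ⊢; linarith
  | top => simp at h

private lemma ereal_add_coe_ne_top {a : EReal} {r s : ℝ} (h : a + (r : ℝ) ≤ (s : ℝ)) :
    a ≠ ⊤ := by
  induction a using EReal.rec with
  | bot => simp
  | coe x => simp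
  | top => simp at h

private lemma ereal_add_coe_eq_top {a : EReal} {r : ℝ} (h : a + (r : ℝ) = ⊤) : a = ⊤ := by
  induction a using EReal.rec with
  | bot => simp at h
  | coe x => exact (EReal.coe_ne_top _ h).elim
  | top => rfl

private lemma expand_sq {n : ℕ} (v w : EuclideanSpace ℝ (Fin n)) (t : ℝ) :
    ‖v + t • w‖ ^ 2 = ‖v‖ ^ 2 + 2 * t * ⟪v, w⟫ + t ^ 2 * ‖w‖ ^ 2 := by
  rw [norm_add_sq_real, real_inner_smul_right, norm_smul, Real.norm_eq_abs, mul_pow, sq_abs]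
  ring

set_option maxHeartbeats 2000000

/-- correspondence of stationary points of `F = φ - g` and `F_μ`. -/
theorem stmt5 {n : ℕ} (φ : En n → EReal) (g : En n → ℝ) (mφ μ : ℝ)
    (hproper : ProperE φ) (hlsc : LowerSemicontinuous φ)
    (hmφ : 0 ≤ mφ) (hweak : WeaklyConvexOn φ mφ)
    (hg : ConvexOn ℝ Set.univ g)
    (hμ : 0 < μ) (hμm : μ * mφ < 1)
    (Fstar : ℝ)
    (hmin : ∃ xs : En n, φ xs - ((g xs : ℝ) : EReal) = (Fstar : EReal) ∧
      ∀ x, (Fstar : EReal) ≤ φ x - ((g x : ℝ) : EReal))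
    (Mφ : En n → ℝ) (xφ : En n → En n) (hφprox : IsMoreau φ μ Mφ xφ)
    (Mg : En n → ℝ) (xg : En n → En n) (hgprox : IsMoreauR g μ Mg xg) :
    (∀ z : En n, xφ z = xg z →
      WeakSubgradAt φ mφ (μ⁻¹ • (z - xφ z)) (xφ z) ∧
      ConvexSubgradAt g (μ⁻¹ • (z - xφ z)) (xφ z) ∧
      φ (xφ z) - ((g (xφ z) : ℝ) : EReal) = ((Mφ z - Mg z : ℝ) : EReal)) ∧
    (∀ x ξ : En n, WeakSubgradAt φ mφ ξ x → ConvexSubgradAt g ξ x →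
      xφ (x + μ • ξ) = x ∧ xg (x + μ • ξ) = x ∧
      ((Mφ (x + μ • ξ) - Mg (x + μ • ξ) : ℝ) : EReal) = φ x - ((g x : ℝ) : EReal)) := by
  constructor
  · -- Part 1
    intro z hxz
    obtain ⟨hM1, hM2, _⟩ := hφprox z
    obtain ⟨hG1, hG2, _⟩ := hgprox z
    set xb := xφ z with hxbdef
    rw [← hxz] at hG1
    have hp : φ xb = ((Mφ z - ‖xb - z‖ ^ 2 / (2 * μ) : ℝ) : EReal) :=
      ereal_add_coe_eq_coe hM1.symm
    set p : ℝ := Mφ z - ‖xb - z‖ ^ 2 / (2 * μ) with hpdef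
    have hzx : z - xb = -(xb - z) := by abel
    refine ⟨?_, ?_, ?_⟩
    · -- weak subgradient of φ
      intro y
      by_cases hy : φ y = ⊤
      · rw [hy, EReal.top_add_coe]; exact le_top
      · have hq : φ y = (((φ y).toReal : ℝ) : EReal) :=
          (EReal.coe_toReal hy (hproper.2 y)).symm
        set q := (φ y).toReal with hqdef
        rw [hp, hq, ← EReal.coe_add, ← EReal.coe_add, EReal.coe_le_coe_iff]
        have hin : ⟪μ⁻¹ • (z - xb) + mφ • xb, y - xb⟫ =
            -(μ⁻¹ * ⟪xb - z, y - xb⟫) + mφ * ⟪xb, y - xb⟫ := by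
          rw [inner_add_left, real_inner_smul_left, real_inner_smul_left, hzx, inner_neg_left]
          ring
        rw [hin]
        refine tto0 (C := ‖y - xb‖ ^ 2 * (μ⁻¹ / 2 - mφ / 2)) fun t ht ht1 => ?_
        have hyt : (1 - t) • xb + t • y = xb + t • (y - xb) := by module
        have hW := hweak xb y (1 - t) t (by linarith) ht.le (by ring)
        rw [hyt, hp, hq] at hW
        have hcast : ((1 - t : ℝ) : EReal) * ((p : ℝ) + ((mφ / 2 * ‖xb‖ ^ 2 : ℝ) : EReal)) +
            ((t : ℝ) : EReal) * ((q : ℝ) + ((mφ / 2 * ‖y‖ ^ 2 : ℝ) : EReal)) =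
            (((1 - t) * (p + mφ / 2 * ‖xb‖ ^ 2) + t * (q + mφ / 2 * ‖y‖ ^ 2) : ℝ) : EReal) := by
          norm_cast
        rw [hcast] at hW
        have hWtop : φ (xb + t • (y - xb)) ≠ ⊤ := ereal_add_coe_ne_top hW
        have hrt : φ (xb + t • (y - xb)) = (((φ (xb + t • (y - xb))).toReal : ℝ) : EReal) :=
          (EReal.coe_toReal hWtop (hproper.2 _)).symm
        set rt := (φ (xb + t • (y - xb))).toReal with hrtdef
        rw [hrt] at hW
        have hWr : rt + mφ / 2 * ‖xb + t • (y - xb)‖ ^ 2 ≤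
            (1 - t) * (p + mφ / 2 * ‖xb‖ ^ 2) + t * (q + mφ / 2 * ‖y‖ ^ 2) := by
          exact_mod_cast hW
        have hMin := hM2 (xb + t • (y - xb))
        rw [hrt] at hMin
        have hsub : xb + t • (y - xb) - z = (xb - z) + t • (y - xb) := by abel
        rw [hsub] at hMin
        have hMr : Mφ z ≤ rt + ‖(xb - z) + t • (y - xb)‖ ^ 2 / (2 * μ) := by
          exact_mod_cast hMin
        have hn1 := expand_sq xb (y - xb) t
        have hn2 := expand_sq (xb - z) (y - xb) t
        rw [hn1] at hWr
        rw [hn2] at hMr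
        have hdiv : ∀ r : ℝ, r / (2 * μ) = r * μ⁻¹ / 2 := fun r => by
          rw [div_eq_mul_inv, mul_inv]; ring
        rw [hdiv] at hMr
        have hp2 : p = Mφ z - ‖xb - z‖ ^ 2 * μ⁻¹ / 2 := by rw [hpdef, hdiv]
        have key : 0 ≤ t * ((q + mφ / 2 * ‖y‖ ^ 2 + t * (‖y - xb‖ ^ 2 * (μ⁻¹ / 2 - mφ / 2))) -
            (p + (mφ / 2 * ‖xb‖ ^ 2 +
              (-(μ⁻¹ * ⟪xb - z, y - xb⟫) + mφ * ⟪xb, y - xb⟫)))) := by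
          linarith [hWr, hMr, hp2]
        have key2 : 0 ≤ (q + mφ / 2 * ‖y‖ ^ 2 + t * (‖y - xb‖ ^ 2 * (μ⁻¹ / 2 - mφ / 2))) -
            (p + (mφ / 2 * ‖xb‖ ^ 2 +
              (-(μ⁻¹ * ⟪xb - z, y - xb⟫) + mφ * ⟪xb, y - xb⟫))) := by
          by_contra hX
          push_neg at hX
          nlinarith [mul_pos ht (neg_pos.mpr hX)]
        linarith
    · -- convex subgradient of g
      intro y
      have hin2 : ⟪μ⁻¹ • (z - xb), y - xb⟫ = -(μ⁻¹ * ⟪xb - z, y - xb⟫) := by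
        rw [real_inner_smul_left, hzx, inner_neg_left]; ring
      rw [hin2]
      refine tto0 (C := ‖y - xb‖ ^ 2 * (μ⁻¹ / 2)) fun t ht ht1 => ?_
      have hyt : (1 - t) • xb + t • y = xb + t • (y - xb) := by module
      have hcvx := hg.2 (Set.mem_univ xb) (Set.mem_univ y)
        (by linarith : (0:ℝ) ≤ 1 - t) ht.le (by ring)
      rw [hyt] at hcvx
      simp only [smul_eq_mul] at hcvx
      have hmin2 := hG2 (xb + t • (y - xb))
      have hsub : xb + t • (y - xb) - z = (xb - z) + t • (y - xb) := by abel
      rw [hsub] at hmin2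
      have hn2 := expand_sq (xb - z) (y - xb) t
      rw [hn2] at hmin2
      have hdiv : ∀ r : ℝ, r / (2 * μ) = r * μ⁻¹ / 2 := fun r => by
        rw [div_eq_mul_inv, mul_inv]; ring
      rw [hdiv] at hmin2
      have hG1' : Mg z = g xb + ‖xb - z‖ ^ 2 * μ⁻¹ / 2 := by rw [hG1, hdiv]
      have key : 0 ≤ t * ((g y + t * (‖y - xb‖ ^ 2 * (μ⁻¹ / 2))) -
          (g xb + -(μ⁻¹ * ⟪xb - z, y - xb⟫))) := by
        linarith [hcvx, hmin2, hG1']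
      have key2 : 0 ≤ (g y + t * (‖y - xb‖ ^ 2 * (μ⁻¹ / 2))) -
          (g xb + -(μ⁻¹ * ⟪xb - z, y - xb⟫)) := by
        by_contra hX
        push_neg at hX
        nlinarith [mul_pos ht (neg_pos.mpr hX)]
      linarith
    · -- envelope values agree
      have hpe : p - g xb = Mφ z - Mg z := by rw [hG1, hpdef]; ring
      rw [hp, ← EReal.coe_sub, hpe]
  · -- Part 2
    intro x ξ hφs hgs
    obtain ⟨hM1, hM2, hM3⟩ := hφprox (x + μ • ξ)
    obtain ⟨hG1, hG2, hG3⟩ := hgprox (x + μ • ξ)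
    set z := x + μ • ξ with hzdef
    have hxt : φ x ≠ ⊤ := by
      obtain ⟨x₀, hx₀⟩ := hproper.1
      intro hT
      have h := hφs x₀
      rw [hT, EReal.top_add_coe, top_le_iff] at h
      exact hx₀ (ereal_add_coe_eq_top h)
    have hpx : φ x = (((φ x).toReal : ℝ) : EReal) :=
      (EReal.coe_toReal hxt (hproper.2 x)).symm
    set p := (φ x).toReal with hpdef
    have hxz : ‖x - z‖ ^ 2 = μ ^ 2 * ‖ξ‖ ^ 2 := by
      have h1 : x - z = -(μ • ξ) := by rw [hzdef]; abel
      rw [h1, norm_neg, norm_smul, Real.norm_eq_abs, mul_pow, sq_abs]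
    have hyz : ∀ y : En n, ‖y - z‖ ^ 2 =
        ‖y - x‖ ^ 2 - 2 * μ * ⟪ξ, y - x⟫ + μ ^ 2 * ‖ξ‖ ^ 2 := by
      intro y
      have h1 : y - z = (y - x) + (-μ) • ξ := by rw [hzdef]; module
      rw [h1, expand_sq, real_inner_comm]
      ring
    have hinv : mφ < μ⁻¹ := by
      rw [← one_div]
      exact (lt_div_iff₀ hμ).mpr (by linarith)
    have hdiv : ∀ r : ℝ, r / (2 * μ) = r * μ⁻¹ / 2 := fun r => by
      rw [div_eq_mul_inv, mul_inv]; ring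
    have hμ1 : μ * μ⁻¹ = 1 := mul_inv_cancel₀ hμ.ne'
    have hKφ : ∀ y : En n, ((p + ‖x - z‖ ^ 2 / (2 * μ) : ℝ) : EReal) ≤
        φ y + ((‖y - z‖ ^ 2 / (2 * μ) : ℝ) : EReal) := by
      intro y
      by_cases hy : φ y = ⊤
      · rw [hy, EReal.top_add_coe]; exact le_top
      · have hqy : φ y = (((φ y).toReal : ℝ) : EReal) :=
          (EReal.coe_toReal hy (hproper.2 y)).symm
        rw [hqy, ← EReal.coe_add, EReal.coe_le_coe_iff]
        set q := (φ y).toReal with hqdef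
        have hsub := hφs y
        rw [hpx, hqy, ← EReal.coe_add, ← EReal.coe_add, EReal.coe_le_coe_iff] at hsub
        have hin : ⟪ξ + mφ • x, y - x⟫ = ⟪ξ, y - x⟫ + mφ * ⟪x, y - x⟫ := by
          rw [inner_add_left, real_inner_smul_left]
        have hb : ‖y‖ ^ 2 = ‖x‖ ^ 2 + 2 * ⟪x, y - x⟫ + ‖y - x‖ ^ 2 := by
          have h2 : ‖y‖ ^ 2 = ‖x + (1:ℝ) • (y - x)‖ ^ 2 := by
            congr 1
            rw [one_smul]
            congr 1
            abel
          rw [h2, expand_sq]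
          ring
        rw [hin, hb] at hsub
        rw [hxz, hyz y, hdiv, hdiv]
        have e1 : μ ^ 2 * ‖ξ‖ ^ 2 * μ⁻¹ / 2 = μ * ‖ξ‖ ^ 2 / 2 := by
          field_simp [hμ.ne']
        have e2 : (‖y - x‖ ^ 2 - 2 * μ * ⟪ξ, y - x⟫ + μ ^ 2 * ‖ξ‖ ^ 2) * μ⁻¹ / 2 =
            ‖y - x‖ ^ 2 * μ⁻¹ / 2 - ⟪ξ, y - x⟫ + μ * ‖ξ‖ ^ 2 / 2 := by
          field_simp [hμ.ne']
        rw [e1, e2]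
        have hd : 0 ≤ (μ⁻¹ - mφ) * ‖y - x‖ ^ 2 :=
          mul_nonneg (sub_nonneg.mpr hinv.le) (sq_nonneg _)
        linarith [hsub, hd]
    have hφeq : φ x + ((‖x - z‖ ^ 2 / (2 * μ) : ℝ) : EReal) = ((Mφ z : ℝ) : EReal) := by
      rw [hpx, ← EReal.coe_add]
      apply le_antisymm
      · rw [hM1]
        exact hKφ (xφ z)
      · have h2 := hM2 x
        rw [hpx, ← EReal.coe_add] at h2
        exact h2
    have hx1 : xφ z = x := (hM3 x hφeq).symm
    have hMφr : Mφ z = p + ‖x - z‖ ^ 2 / (2 * μ) := by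
      have h3 := hφeq
      rw [hpx, ← EReal.coe_add] at h3
      exact_mod_cast h3.symm
    have hKg : ∀ y : En n, g x + ‖x - z‖ ^ 2 / (2 * μ) ≤ g y + ‖y - z‖ ^ 2 / (2 * μ) := by
      intro y
      have hsub := hgs y
      rw [hxz, hyz y, hdiv, hdiv]
      have e1 : μ ^ 2 * ‖ξ‖ ^ 2 * μ⁻¹ / 2 = μ * ‖ξ‖ ^ 2 / 2 := by
        field_simp [hμ.ne']
      have e2 : (‖y - x‖ ^ 2 - 2 * μ * ⟪ξ, y - x⟫ + μ ^ 2 * ‖ξ‖ ^ 2) * μ⁻¹ / 2 =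
          ‖y - x‖ ^ 2 * μ⁻¹ / 2 - ⟪ξ, y - x⟫ + μ * ‖ξ‖ ^ 2 / 2 := by
        field_simp [hμ.ne']
      rw [e1, e2]
      have hd : 0 ≤ μ⁻¹ * ‖y - x‖ ^ 2 :=
        mul_nonneg (inv_nonneg.mpr hμ.le) (sq_nonneg _)
      linarith [hsub, hd]
    have hgeq : g x + ‖x - z‖ ^ 2 / (2 * μ) = Mg z :=
      le_antisymm (by rw [hG1]; exact hKg (xg z)) (hG2 x)
    have hx2 : xg z = x := (hG3 x hgeq).symm
    refine ⟨hx1, hx2, ?_⟩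
    have hpe : Mφ z - Mg z = p - g x := by rw [hMφr, ← hgeq]; ring
    rw [hpx, ← EReal.coe_sub, hpe]
end
end

section
/- Let 0 < μ < 1/m_φ and assume F attains a finite minimal value F* with nonempty minimizer set argmin F. Then argmin F_μ is nonempty, min_{z∈ℝⁿ} F_μ(z) = F*, and if z ∈ argmin F_μ then x_{μφ}(z) ∈ argmin F; conversely, if x ∈ argmin F then there exists z ∈ argmin F_μ with x = x_{μφ}(z) = x_{μg}(z). -/
open scoped RealInnerProductSpace

noncomputable section

/-! At the proximal point `x = xφ z` we have `Mg z ≤ g x + ‖x - z‖² / (2μ)`, hence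
`F_μ z ≥ F x ≥ F*`; so a minimizer `z` of `F_μ` with value `F*` yields the minimizer `xφ z` of `F`.
Conversely, let `x` minimize `F` and let `ξ ∈ ∂g(x)` (which exists by separating `(x, g x)` from
the open strict epigraph of `g`). Minimality of `x` for `φ - g` makes `ξ` a subgradient of `φ` as
well, so `x` minimizes both `φ + ‖· - z‖² / (2μ)` and `g + ‖· - z‖² / (2μ)` for `z = x + μ ξ`.
Thus `x = xφ z = xg z` and `F_μ z = F x = F*`. -/

theorem ConvexOn.exists_strongDual_add_le {E : Type*} [NormedAddCommGroup E] [NormedSpace ℝ E]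
    {g : E → ℝ} (hg : ConvexOn ℝ Set.univ g) (hcont : Continuous g) (x : E) :
    ∃ ℓ : StrongDual ℝ E, ∀ y, g x + ℓ (y - x) ≤ g y := by
  set s : Set (E × ℝ) := {p | g p.1 < p.2}
  have hs_convex : Convex ℝ s := by
    have hconv : ConvexOn ℝ Set.univ (fun p : E × ℝ => g p.1 - p.2) :=
      (hg.comp_linearMap (LinearMap.fst ℝ E ℝ)).sub
        ((LinearMap.snd ℝ E ℝ).concaveOn convex_univ)
    simpa [s, sub_neg] using hconv.convex_lt 0
  have hs_open : IsOpen s := isOpen_lt (hcont.comp continuous_fst) continuous_snd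
  obtain ⟨f, hf⟩ :=
    geometric_hahn_banach_open_point (x := (x, g x)) hs_convex hs_open (lt_irrefl (g x))
  set c : ℝ := f (0, 1)
  have hf_apply : ∀ y t, f (y, t) = f (y, 0) + t * c := fun y t => by
    rw [← smul_eq_mul, ← map_smul, ← map_add]; simp
  have hc : c < 0 := by
    have := hf (x, g x + 1) (by simp [s])
    rw [hf_apply x, hf_apply x (g x)] at this
    linarith
  refine ⟨(-c)⁻¹ • f.comp (ContinuousLinearMap.inl ℝ E ℝ), fun y => ?_⟩
  refine le_of_forall_gt_imp_ge_of_dense fun t ht => ?_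
  have hsep := hf (y, t) ht
  rw [hf_apply y, hf_apply x] at hsep
  have hℓ : ((-c)⁻¹ • f.comp (ContinuousLinearMap.inl ℝ E ℝ)) (y - x)
      = (f (y, 0) - f (x, 0)) / (-c) := by
    simp [div_eq_inv_mul, ← map_sub, Prod.mk_sub_mk]
  rw [hℓ, ← le_sub_iff_add_le', div_le_iff₀ (neg_pos.2 hc)]
  linarith

theorem exists_convexSubgradAt {n : ℕ} {g : En n → ℝ} (hg : ConvexOn ℝ Set.univ g) (x : En n) :
    ∃ ξ, ConvexSubgradAt g ξ x := by
  obtain ⟨ℓ, hℓ⟩ :=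
    hg.exists_strongDual_add_le (continuousOn_univ.1 (hg.continuousOn isOpen_univ)) x
  exact ⟨(InnerProductSpace.toDual ℝ (En n)).symm ℓ, fun y => by simpa using hℓ y⟩

section ProximalShift

variable {E : Type*} [NormedAddCommGroup E] [InnerProductSpace ℝ E]

theorem norm_sub_add_smul_sq_div (x y ξ : E) {μ : ℝ} (hμ : μ ≠ 0) :
    ‖y - (x + μ • ξ)‖ ^ 2 / (2 * μ) =
      ‖y - x‖ ^ 2 / (2 * μ) - ⟪ξ, y - x⟫ + ‖x - (x + μ • ξ)‖ ^ 2 / (2 * μ) := by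
  rw [show y - (x + μ • ξ) = (y - x) - μ • ξ by abel, sub_add_cancel_left, norm_neg,
    norm_sub_sq_real, real_inner_smul_right, real_inner_comm, norm_smul, Real.norm_eq_abs,
    mul_pow, sq_abs]
  field_simp

theorem add_norm_sub_sq_div_le_of_add_inner_le {a b μ : ℝ} {x y ξ : E} (hμ : 0 < μ)
    (h : a + ⟪ξ, y - x⟫ ≤ b) :
    a + ‖x - (x + μ • ξ)‖ ^ 2 / (2 * μ) ≤ b + ‖y - (x + μ • ξ)‖ ^ 2 / (2 * μ) := by
  have hsq : 0 ≤ ‖y - x‖ ^ 2 / (2 * μ) := by positivity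
  rw [norm_sub_add_smul_sq_div x y ξ hμ.ne']
  linarith

theorem EReal.add_norm_sub_sq_div_le_of_add_inner_le {ψ : E → EReal} {a μ : ℝ} {x ξ : E}
    (hμ : 0 < μ) (hx : ψ x = a) (hξ : ∀ y, ((a + ⟪ξ, y - x⟫ : ℝ) : EReal) ≤ ψ y) (y : E) :
    ψ x + ((‖x - (x + μ • ξ)‖ ^ 2 / (2 * μ) : ℝ) : EReal) ≤
      ψ y + ((‖y - (x + μ • ξ)‖ ^ 2 / (2 * μ) : ℝ) : EReal) := by
  induction hy : ψ y using EReal.rec with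
  | bot => exact absurd (le_bot_iff.1 (hy ▸ hξ y)) (EReal.coe_ne_bot _)
  | top => simp
  | coe b =>
    rw [hx, ← EReal.coe_add, ← EReal.coe_add, EReal.coe_le_coe_iff]
    exact _root_.add_norm_sub_sq_div_le_of_add_inner_le hμ (EReal.coe_le_coe_iff.1 (hy ▸ hξ y))

end ProximalShift

section Moreau

variable {n : ℕ} {φ : En n → EReal} {g : En n → ℝ} {μ : ℝ} {Mφ Mg : En n → ℝ}
  {xφ xg : En n → En n}

theorem IsMoreau.apply_prox_s6 (hφ : IsMoreau φ μ Mφ xφ) (z : En n) :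
    φ (xφ z) = ((Mφ z - ‖xφ z - z‖ ^ 2 / (2 * μ) : ℝ) : EReal) := by
  rw [EReal.coe_sub, (hφ z).1, EReal.add_sub_cancel_right]

theorem IsMoreau.eq_prox_of_le (hφ : IsMoreau φ μ Mφ xφ) {x z : En n}
    (hx : ∀ y, φ x + ((‖x - z‖ ^ 2 / (2 * μ) : ℝ) : EReal) ≤
      φ y + ((‖y - z‖ ^ 2 / (2 * μ) : ℝ) : EReal)) :
    (Mφ z : EReal) = φ x + ((‖x - z‖ ^ 2 / (2 * μ) : ℝ) : EReal) ∧ x = xφ z := by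
  have hM := le_antisymm ((hφ z).2.1 x) ((hφ z).1 ▸ hx (xφ z))
  exact ⟨hM, (hφ z).2.2 x hM.symm⟩

theorem IsMoreauR.eq_prox_of_le (hg : IsMoreauR g μ Mg xg) {x z : En n}
    (hx : ∀ y, g x + ‖x - z‖ ^ 2 / (2 * μ) ≤ g y + ‖y - z‖ ^ 2 / (2 * μ)) :
    Mg z = g x + ‖x - z‖ ^ 2 / (2 * μ) ∧ x = xg z := by
  have hM := le_antisymm ((hg z).2.1 x) ((hg z).1 ▸ hx (xg z))
  exact ⟨hM, (hg z).2.2 x hM.symm⟩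

theorem IsMoreau.apply_prox_sub_le (hφ : IsMoreau φ μ Mφ xφ) (hg : IsMoreauR g μ Mg xg)
    (z : En n) : φ (xφ z) - (g (xφ z) : EReal) ≤ ((Mφ z - Mg z : ℝ) : EReal) := by
  rw [hφ.apply_prox_s6, ← EReal.coe_sub, EReal.coe_le_coe_iff]
  linarith [(hg z).2.1 (xφ z)]

theorem exists_prox_eq_of_le_sub (hμ : 0 < μ) (hgc : ConvexOn ℝ Set.univ g)
    (hφ : IsMoreau φ μ Mφ xφ) (hg : IsMoreauR g μ Mg xg) {c : ℝ} {x : En n}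
    (hx : φ x = ((c + g x : ℝ) : EReal)) (hc : ∀ y, (c : EReal) ≤ φ y - (g y : EReal)) :
    ∃ z, x = xφ z ∧ x = xg z ∧ Mφ z - Mg z = c := by
  obtain ⟨ξ, hξ⟩ := exists_convexSubgradAt hgc x
  obtain ⟨hMg, hxg⟩ := hg.eq_prox_of_le fun y => add_norm_sub_sq_div_le_of_add_inner_le hμ (hξ y)
  have hξφ : ∀ y, ((c + g x + ⟪ξ, y - x⟫ : ℝ) : EReal) ≤ φ y := fun y =>
    calc ((c + g x + ⟪ξ, y - x⟫ : ℝ) : EReal) ≤ ((c + g y : ℝ) : EReal) :=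
          EReal.coe_le_coe_iff.2 (by linarith [hξ y])
      _ ≤ φ y := by rw [EReal.coe_add]; exact EReal.add_le_of_le_sub (hc y)
  obtain ⟨hMφ, hxφ⟩ := hφ.eq_prox_of_le (EReal.add_norm_sub_sq_div_le_of_add_inner_le hμ hx hξφ)
  refine ⟨x + μ • ξ, hxφ, hxg, ?_⟩
  rw [hx, ← EReal.coe_add, EReal.coe_eq_coe_iff] at hMφ
  linarith

end Moreau

theorem stmt6_general {n : ℕ} (φ : En n → EReal) (g : En n → ℝ) (μ : ℝ)
    (hg : ConvexOn ℝ Set.univ g)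
    (hμ : 0 < μ)
    (Fstar : ℝ)
    (hmin : ∃ xs : En n, φ xs - ((g xs : ℝ) : EReal) = (Fstar : EReal) ∧
      ∀ x, (Fstar : EReal) ≤ φ x - ((g x : ℝ) : EReal))
    (Mφ : En n → ℝ) (xφ : En n → En n) (hφprox : IsMoreau φ μ Mφ xφ)
    (Mg : En n → ℝ) (xg : En n → En n) (hgprox : IsMoreauR g μ Mg xg) :
    (∀ z : En n, Fstar ≤ Mφ z - Mg z) ∧
    (∃ z : En n, (∀ w, Mφ z - Mg z ≤ Mφ w - Mg w) ∧ Mφ z - Mg z = Fstar) ∧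
    (∀ z : En n, (∀ w, Mφ z - Mg z ≤ Mφ w - Mg w) →
      ∀ x, φ (xφ z) - ((g (xφ z) : ℝ) : EReal) ≤ φ x - ((g x : ℝ) : EReal)) ∧
    (∀ x : En n, (∀ y, φ x - ((g x : ℝ) : EReal) ≤ φ y - ((g y : ℝ) : EReal)) →
      ∃ z : En n, (∀ w, Mφ z - Mg z ≤ Mφ w - Mg w) ∧ x = xφ z ∧ x = xg z) := by
  obtain ⟨xs, hxs, hlb⟩ := hmin
  have hlower : ∀ z, Fstar ≤ Mφ z - Mg z := fun z =>
    EReal.coe_le_coe_iff.1 ((hlb _).trans (hφprox.apply_prox_sub_le hgprox z))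
  have hcons : ∀ x, (∀ y, φ x - (g x : EReal) ≤ φ y - (g y : EReal)) →
      ∃ z, x = xφ z ∧ x = xg z ∧ Mφ z - Mg z = Fstar := fun x hx => by
    have hFx : φ x - (g x : EReal) = Fstar := le_antisymm (hxs ▸ hx xs) (hlb x)
    refine exists_prox_eq_of_le_sub hμ hg hφprox hgprox ?_ hlb
    rw [EReal.coe_add, ← hFx, EReal.sub_add_cancel]
  obtain ⟨z₀, -, -, hz₀⟩ := hcons xs fun y => hxs ▸ hlb y
  refine ⟨hlower, ⟨z₀, fun w => hz₀ ▸ hlower w, hz₀⟩, fun z hz x => ?_, fun x hx => ?_⟩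
  · calc φ (xφ z) - (g (xφ z) : EReal) ≤ ((Mφ z - Mg z : ℝ) : EReal) :=
          hφprox.apply_prox_sub_le hgprox z
      _ ≤ Fstar := EReal.coe_le_coe_iff.2 ((hz z₀).trans hz₀.le)
      _ ≤ φ x - (g x : EReal) := hlb x
  · obtain ⟨z, hxφ, hxg, hz⟩ := hcons x hx
    exact ⟨z, fun w => hz ▸ hlower w, hxφ, hxg⟩

/-- correspondence of global minima of `F = φ - g` and `F_μ`,
and `min F_μ = F*`. -/
theorem stmt6 {n : ℕ} (φ : En n → EReal) (g : En n → ℝ) (mφ μ : ℝ)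
    (hproper : ProperE φ) (hlsc : LowerSemicontinuous φ)
    (hmφ : 0 ≤ mφ) (hweak : WeaklyConvexOn φ mφ)
    (hg : ConvexOn ℝ Set.univ g)
    (hμ : 0 < μ) (hμm : μ * mφ < 1)
    (Fstar : ℝ)
    (hmin : ∃ xs : En n, φ xs - ((g xs : ℝ) : EReal) = (Fstar : EReal) ∧
      ∀ x, (Fstar : EReal) ≤ φ x - ((g x : ℝ) : EReal))
    (Mφ : En n → ℝ) (xφ : En n → En n) (hφprox : IsMoreau φ μ Mφ xφ)
    (Mg : En n → ℝ) (xg : En n → En n) (hgprox : IsMoreauR g μ Mg xg) :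
    (∀ z : En n, Fstar ≤ Mφ z - Mg z) ∧
    (∃ z : En n, (∀ w, Mφ z - Mg z ≤ Mφ w - Mg w) ∧ Mφ z - Mg z = Fstar) ∧
    (∀ z : En n, (∀ w, Mφ z - Mg z ≤ Mφ w - Mg w) →
      ∀ x, φ (xφ z) - ((g (xφ z) : ℝ) : EReal) ≤ φ x - ((g x : ℝ) : EReal)) ∧
    (∀ x : En n, (∀ y, φ x - ((g x : ℝ) : EReal) ≤ φ y - ((g y : ℝ) : EReal)) →
      ∃ z : En n, (∀ w, Mφ z - Mg z ≤ Mφ w - Mg w) ∧ x = xφ z ∧ x = xg z) :=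
  stmt6_general φ g μ hg hμ Fstar hmin Mφ xφ hφprox Mg xg hgprox
end
end

section
/- Let 0 < μ < 1/m_φ and assume F attains a finite minimal value F*. If F is level-bounded and g is Lipschitz up to a constant, i.e., there exist L > 0 and M ≥ 0 such that |g(x) − g(z)| ≤ L‖x − z‖ + M for all x, z ∈ ℝⁿ, then F_μ is level-bounded. -/
open scoped RealInnerProductSpace

noncomputable section

/-- An extended-real-valued function is level-bounded if all its sublevel sets are bounded. -/
def LevelBoundedE {n : ℕ} (H : En n → EReal) : Prop :=
  ∀ α : ℝ, Bornology.IsBounded {x : En n | H x ≤ (α : EReal)}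

/-- A real-valued function is level-bounded if all its sublevel sets are bounded. -/
def LevelBoundedR {n : ℕ} (H : En n → ℝ) : Prop :=
  ∀ α : ℝ, Bornology.IsBounded {x : En n | H x ≤ α}


lemma quad_bound (μ L C t : ℝ) (hμ : 0 < μ) (hL : 0 ≤ L) (ht : 0 ≤ t)
    (h : t ^ 2 / (2 * μ) ≤ L * t + C) :
    t ≤ 4 * μ * L + Real.sqrt (4 * μ * |C|) := by
  by_contra hc
  push_neg at hc
  have hs0 : 0 ≤ Real.sqrt (4 * μ * |C|) := Real.sqrt_nonneg _
  have h4 : 4 * μ * L ≤ t := by nlinarith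
  have hsl : Real.sqrt (4 * μ * |C|) < t := by nlinarith
  have h' : t ^ 2 ≤ (L * t + C) * (2 * μ) := (div_le_iff₀ (by positivity)).mp h
  have hC : C ≤ |C| := le_abs_self C
  have hmul : 4 * μ * L * t ≤ t * t := mul_le_mul_of_nonneg_right h4 ht
  have hmc : μ * C ≤ μ * |C| := mul_le_mul_of_nonneg_left hC hμ.le
  have h2 : t ^ 2 ≤ 4 * μ * |C| := by nlinarith
  have : t ≤ Real.sqrt (4 * μ * |C|) := by
    calc t = Real.sqrt (t ^ 2) := (Real.sqrt_sq ht).symm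
    _ ≤ Real.sqrt (4 * μ * |C|) := Real.sqrt_le_sqrt h2
  linarith

/-- if `F` is level-bounded and `g` is Lipschitz up to a constant,
then `F_μ` is level-bounded. -/
theorem stmt9 {n : ℕ} (φ : En n → EReal) (g : En n → ℝ) (mφ μ : ℝ)
    (hproper : ProperE φ) (hlsc : LowerSemicontinuous φ)
    (hmφ : 0 ≤ mφ) (hweak : WeaklyConvexOn φ mφ)
    (hg : ConvexOn ℝ Set.univ g)
    (hμ : 0 < μ) (hμm : μ * mφ < 1)
    (Fstar : ℝ)
    (hmin : ∃ xs : En n, φ xs - ((g xs : ℝ) : EReal) = (Fstar : EReal) ∧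
      ∀ x, (Fstar : EReal) ≤ φ x - ((g x : ℝ) : EReal))
    (Mφ : En n → ℝ) (xφ : En n → En n) (hφprox : IsMoreau φ μ Mφ xφ)
    (Mg : En n → ℝ) (xg : En n → En n) (hgprox : IsMoreauR g μ Mg xg)
    (hFlb : LevelBoundedE (fun x => φ x - ((g x : ℝ) : EReal)))
    (L M : ℝ) (hL : 0 < L) (hM : 0 ≤ M)
    (hgLip : ∀ x z : En n, |g x - g z| ≤ L * ‖x - z‖ + M) :
    LevelBoundedR (fun z => Mφ z - Mg z) := by
  intro α
  obtain ⟨xs, hxs, hlow⟩ := hmin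
  set C := α - Fstar + M with hCdef
  set R := 4 * μ * L + Real.sqrt (4 * μ * |C|) with hRdef
  have hR0 : 0 ≤ R := by positivity
  set β := α + L * R + M with hβdef
  obtain ⟨R', hR'⟩ := (Metric.isBounded_iff_subset_closedBall 0).mp (hFlb β)
  apply Bornology.IsBounded.subset (Metric.isBounded_closedBall (x := (0 : En n)) (r := R' + R))
  intro z hz
  simp only [Set.mem_setOf_eq] at hz
  obtain ⟨heq, hle, -⟩ := hφprox z
  set p := xφ z with hpdef
  set t := ‖p - z‖ with htdef
  have ht0 : 0 ≤ t := norm_nonneg _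
  have hne_bot : φ p ≠ ⊥ := hproper.2 p
  have hne_top : φ p ≠ ⊤ := by
    intro h
    rw [h] at heq
    simp only [EReal.top_add_coe] at heq
    exact EReal.coe_ne_top _ heq
  set r := (φ p).toReal with hrdef
  have hpr : φ p = (r : EReal) := (EReal.coe_toReal hne_top hne_bot).symm
  rw [hpr] at heq
  have heqR : Mφ z = r + t ^ 2 / (2 * μ) := by exact_mod_cast heq
  obtain ⟨-, hgle, -⟩ := hgprox z
  have hMg : Mg z ≤ g z := by
    have := hgle z
    simpa using this
  have hgz : g z ≤ g p + (L * t + M) := by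
    have h1 := (abs_le.mp (hgLip z p)).2
    rw [norm_sub_rev] at h1
    linarith
  have hF : Fstar ≤ r - g p := by
    have h1 := hlow p
    rw [hpr] at h1
    exact_mod_cast h1
  have hq0 : 0 ≤ t ^ 2 / (2 * μ) := by positivity
  have hkey : t ^ 2 / (2 * μ) ≤ L * t + C := by
    rw [hCdef]; linarith
  have htR : t ≤ R := quad_bound μ L C t hμ hL.le ht0 hkey
  have hLt : L * t ≤ L * R := mul_le_mul_of_nonneg_left htR hL.le
  have hpF : p ∈ {x : En n | (fun x => φ x - ((g x : ℝ) : EReal)) x ≤ ((β : ℝ) : EReal)} := by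
    simp only [Set.mem_setOf_eq]
    rw [hpr]
    have : r - g p ≤ β := by rw [hβdef]; linarith
    exact_mod_cast this
  have hpball : ‖p‖ ≤ R' := by
    have := hR' hpF
    simpa [Metric.mem_closedBall, dist_eq_norm] using this
  have hzn : ‖z‖ ≤ ‖p‖ + t := by
    calc ‖z‖ = ‖p - (p - z)‖ := by rw [sub_sub_cancel]
    _ ≤ ‖p‖ + ‖p - z‖ := norm_sub_le _ _
  simp only [Metric.mem_closedBall, dist_eq_norm, sub_zero]
  linarith
end
end

section
/- Let 0 < μ < 1/m_φ and assume F attains a finite minimal value F*. If F is level-coercive, i.e., there exist α > 0 and r ∈ ℝ such that F(x) ≥ α‖x‖ + r for all x ∈ ℝⁿ, then F_μ is level-bounded. -/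
open scoped RealInnerProductSpace

noncomputable section

/-!
Write `v = xφ z` and `u = xg z`. The proximal objective `x ↦ g x + ‖x - z‖² / (2μ)` of the convex
function `g` grows quadratically away from its minimiser `u`, so evaluating it at `v` gives
`F_μ z ≥ F v + ‖v - u‖² / (4μ) ≥ α‖v‖ + r + ‖v - u‖² / (4μ)`. On a sublevel set of `F_μ` this
bounds `v`, hence `u`. Finally `z - u` is bounded too, because `g`, being continuous, is bounded
on bounded sets, and the optimality of `u` limits how far `z` can be from it.
-/

open Metric

section ProximalPoint

variable {E : Type*} {g : E → ℝ} {μ : ℝ} {z u : E}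

theorem ConvexOn.add_norm_sub_sq_div_le_of_isMinOn [NormedAddCommGroup E] [InnerProductSpace ℝ E]
    (hg : ConvexOn ℝ Set.univ g)
    (hu : IsMinOn (fun x => g x + ‖x - z‖ ^ 2 / (2 * μ)) Set.univ u) (v : E) :
    g u + ‖u - z‖ ^ 2 / (2 * μ) + ‖v - u‖ ^ 2 / (4 * μ) ≤ g v + ‖v - z‖ ^ 2 / (2 * μ) := by
  set m : E := (1 / 2 : ℝ) • v + (1 / 2 : ℝ) • u
  have hmin : g u + ‖u - z‖ ^ 2 / (2 * μ) ≤ g m + ‖m - z‖ ^ 2 / (2 * μ) := hu (Set.mem_univ m)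
  have hconv : g m ≤ (1 / 2) * g v + (1 / 2) * g u :=
    hg.2 (Set.mem_univ v) (Set.mem_univ u) (by norm_num) (by norm_num) (by norm_num)
  have hpar : ‖m - z‖ ^ 2 = ‖v - z‖ ^ 2 / 2 + ‖u - z‖ ^ 2 / 2 - ‖v - u‖ ^ 2 / 4 := by
    have hmz : m - z = (1 / 2 : ℝ) • ((v - z) + (u - z)) := by module
    have hvu : (v - z) - (u - z) = v - u := by abel
    have hsub := norm_sub_sq_real (v - z) (u - z)
    rw [hvu] at hsub
    rw [hmz, norm_smul, Real.norm_of_nonneg (by norm_num), mul_pow, norm_add_sq_real]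
    linear_combination (1 / 4) * hsub
  rw [hpar] at hmin
  linear_combination 2 * (hmin + hconv)

theorem IsMinOn.norm_sub_le_of_forall_sub_le [NormedAddCommGroup E] [NormedSpace ℝ E] {C : ℝ}
    (hu : IsMinOn (fun x => g x + ‖x - z‖ ^ 2 / (2 * μ)) Set.univ u) (hμ : 0 < μ)
    (hC : ∀ w ∈ closedBall u 1, g w - g u ≤ C) :
    ‖z - u‖ ≤ μ * C + 1 / 2 := by
  have hC0 : 0 ≤ C := by simpa using hC u (mem_closedBall_self zero_le_one)
  rcases eq_or_ne z u with rfl | hzu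
  · simp only [sub_self, norm_zero]; positivity
  set s := ‖z - u‖
  have hs : 0 < s := norm_pos_iff.mpr (sub_ne_zero.mpr hzu)
  -- compare with the point at distance `1` from `u` in the direction of `z`
  set w : E := u + s⁻¹ • (z - u)
  have hwu : ‖w - u‖ = 1 := by
    simp only [w, add_sub_cancel_left, norm_smul, norm_inv, Real.norm_eq_abs, abs_of_pos hs]
    exact inv_mul_cancel₀ hs.ne'
  have hwz : ‖w - z‖ ^ 2 = (s - 1) ^ 2 := by
    have : w - z = (s⁻¹ - 1) • (z - u) := by simp only [w]; module
    rw [this, norm_smul, Real.norm_eq_abs, mul_pow, sq_abs]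
    field_simp
    ring
  have hmin : g u + s ^ 2 / (2 * μ) ≤ g w + (s - 1) ^ 2 / (2 * μ) := by
    have : g u + ‖u - z‖ ^ 2 / (2 * μ) ≤ g w + ‖w - z‖ ^ 2 / (2 * μ) := hu (Set.mem_univ w)
    rwa [norm_sub_rev u z, hwz] at this
  have hgw : g w - g u ≤ C := hC w (by rw [mem_closedBall, dist_eq_norm, hwu])
  have hgain : (2 * s - 1) / (2 * μ) ≤ C := by
    have : (2 * s - 1) / (2 * μ) = s ^ 2 / (2 * μ) - (s - 1) ^ 2 / (2 * μ) := by ring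
    linarith
  rw [div_le_iff₀ (by positivity)] at hgain
  linarith

end ProximalPoint

section MoreauEnvelope

variable {n : ℕ} {μ : ℝ}

theorem IsMoreauR.isMinOn {g : En n → ℝ} {Mg : En n → ℝ} {xg : En n → En n}
    (h : IsMoreauR g μ Mg xg) (z : En n) :
    IsMinOn (fun x => g x + ‖x - z‖ ^ 2 / (2 * μ)) Set.univ (xg z) :=
  isMinOn_iff.mpr fun x _ => (h z).1 ▸ (h z).2.1 x

theorem IsMoreau.apply_prox_eq {φ : En n → EReal} {Mφ : En n → ℝ} {xφ : En n → En n}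
    (h : IsMoreau φ μ Mφ xφ) (z : En n) :
    φ (xφ z) = ((Mφ z - ‖xφ z - z‖ ^ 2 / (2 * μ) : ℝ) : EReal) := by
  have hM := (h z).1
  induction hφ : φ (xφ z) using EReal.rec with
  | bot => rw [hφ, EReal.bot_add] at hM; exact absurd hM (EReal.coe_ne_bot _)
  | top => rw [hφ, EReal.top_add_coe] at hM; exact absurd hM (EReal.coe_ne_top _)
  | coe a =>
    rw [hφ, ← EReal.coe_add, EReal.coe_eq_coe_iff] at hM
    rw [hM, add_sub_cancel_right]

theorem IsMoreau.add_norm_sub_sq_div_le_sub {φ : En n → EReal} {g : En n → ℝ}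
    {Mφ Mg : En n → ℝ} {xφ xg : En n → En n} {α r : ℝ}
    (hφ : IsMoreau φ μ Mφ xφ) (hgM : IsMoreauR g μ Mg xg) (hg : ConvexOn ℝ Set.univ g)
    (hcoercive : ∀ x : En n, ((α * ‖x‖ + r : ℝ) : EReal) ≤ φ x - ((g x : ℝ) : EReal))
    (z : En n) :
    α * ‖xφ z‖ + r + ‖xφ z - xg z‖ ^ 2 / (4 * μ) ≤ Mφ z - Mg z := by
  have hF : α * ‖xφ z‖ + r ≤ Mφ z - ‖xφ z - z‖ ^ 2 / (2 * μ) - g (xφ z) := by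
    have := hcoercive (xφ z)
    rwa [hφ.apply_prox_eq, ← EReal.coe_sub, EReal.coe_le_coe_iff] at this
  have hgrowth := hg.add_norm_sub_sq_div_le_of_isMinOn (hgM.isMinOn z) (xφ z)
  rw [← (hgM z).1] at hgrowth
  linarith

theorem IsMoreau.norm_prox_le_of_sub_le {φ : En n → EReal} {g : En n → ℝ}
    {Mφ Mg : En n → ℝ} {xφ xg : En n → En n} {α r β : ℝ} {z : En n}
    (hφ : IsMoreau φ μ Mφ xφ) (hgM : IsMoreauR g μ Mg xg) (hg : ConvexOn ℝ Set.univ g)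
    (hμ : 0 < μ) (hα : 0 < α)
    (hcoercive : ∀ x : En n, ((α * ‖x‖ + r : ℝ) : EReal) ≤ φ x - ((g x : ℝ) : EReal))
    (hz : Mφ z - Mg z ≤ β) :
    ‖xg z‖ ≤ (β - r) / α + 2 * μ * (β - r) + 1 / 2 := by
  set v := xφ z
  set u := xg z
  have h := hφ.add_norm_sub_sq_div_le_sub hgM hg hcoercive z
  have hquad : 0 ≤ ‖v - u‖ ^ 2 / (4 * μ) := by positivity
  have hv : ‖v‖ ≤ (β - r) / α := by
    rw [le_div_iff₀ hα]
    nlinarith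
  have hvu : ‖v - u‖ ^ 2 ≤ 4 * μ * (β - r) := by
    rw [← div_le_iff₀' (by positivity)]
    nlinarith [norm_nonneg v]
  calc ‖u‖ ≤ ‖v‖ + ‖v - u‖ := norm_le_norm_add_norm_sub v u
    _ ≤ (β - r) / α + 2 * μ * (β - r) + 1 / 2 := by nlinarith [sq_nonneg (‖v - u‖ - 1)]

end MoreauEnvelope

theorem stmt10_general {n : ℕ} (φ : En n → EReal) (g : En n → ℝ) (μ : ℝ)
    (hg : ConvexOn ℝ Set.univ g)
    (hμ : 0 < μ)
    (Mφ : En n → ℝ) (xφ : En n → En n) (hφprox : IsMoreau φ μ Mφ xφ)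
    (Mg : En n → ℝ) (xg : En n → En n) (hgprox : IsMoreauR g μ Mg xg)
    (α r : ℝ) (hα : 0 < α)
    (hcoercive : ∀ x : En n, ((α * ‖x‖ + r : ℝ) : EReal) ≤ φ x - ((g x : ℝ) : EReal)) :
    LevelBoundedR (fun z => Mφ z - Mg z) := by
  intro β
  set R := (β - r) / α + 2 * μ * (β - r) + 1 / 2
  obtain ⟨C, hC⟩ := (isCompact_closedBall (0 : En n) (R + 1)).exists_bound_of_continuousOn
    hg.locallyLipschitz.continuous.continuousOn
  refine (isBounded_closedBall (x := 0) (r := R + μ * (2 * C) + 1 / 2)).subset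
    fun z hz => ?_
  have hu : ‖xg z‖ ≤ R := hφprox.norm_prox_le_of_sub_le hgprox hg hμ hα hcoercive hz
  have hball : closedBall (xg z) 1 ⊆ closedBall 0 (R + 1) :=
    closedBall_subset_closedBall' (by rw [dist_zero_right]; linarith)
  have hosc : ∀ w ∈ closedBall (xg z) 1, g w - g (xg z) ≤ 2 * C := fun w hw => by
    have hw := hC w (hball hw)
    have hxg := hC _ (hball (mem_closedBall_self zero_le_one))
    rw [Real.norm_eq_abs, abs_le] at hw hxg
    linarith
  have hzu := (hgprox.isMinOn z).norm_sub_le_of_forall_sub_le hμ hosc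
  rw [mem_closedBall_zero_iff]
  linarith [norm_le_norm_add_norm_sub' z (xg z)]

/-- if `F` is level-coercive then `F_μ` is level-bounded. -/
theorem stmt10 {n : ℕ} (φ : En n → EReal) (g : En n → ℝ) (mφ μ : ℝ)
    (hproper : ProperE φ) (hlsc : LowerSemicontinuous φ)
    (hmφ : 0 ≤ mφ) (hweak : WeaklyConvexOn φ mφ)
    (hg : ConvexOn ℝ Set.univ g)
    (hμ : 0 < μ) (hμm : μ * mφ < 1)
    (Fstar : ℝ)
    (hmin : ∃ xs : En n, φ xs - ((g xs : ℝ) : EReal) = (Fstar : EReal) ∧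
      ∀ x, (Fstar : EReal) ≤ φ x - ((g x : ℝ) : EReal))
    (Mφ : En n → ℝ) (xφ : En n → En n) (hφprox : IsMoreau φ μ Mφ xφ)
    (Mg : En n → ℝ) (xg : En n → En n) (hgprox : IsMoreauR g μ Mg xg)
    (α r : ℝ) (hα : 0 < α)
    (hcoercive : ∀ x : En n, ((α * ‖x‖ + r : ℝ) : EReal) ≤ φ x - ((g x : ℝ) : EReal)) :
    LevelBoundedR (fun z => Mφ z - Mg z) :=
  stmt10_general φ g μ hg hμ Mφ xφ hφprox Mg xg hgprox α r hα hcoercive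
end
end

section
/- Let 0 < μ < 1/m_φ and assume F attains a finite minimal value F*. If the effective domain dom φ = {x : φ(x) < +∞} is compact, then F_μ is coercive: for every α > 0 there exists r ∈ ℝ such that F_μ(z) ≥ α‖z‖ + r for all z ∈ ℝⁿ. In particular F_μ is level-bounded. -/
open scoped RealInnerProductSpace

noncomputable section

/-!
The proximal point `p = xφ z` lies in the compact set `dom φ`, and `φ ≥ F* + g` gives
`Mφ z ≥ F* + g p + ‖p - z‖² / (2μ)`. Testing the infimum defining `Mg z` at the point `w`
obtained by moving `p` a distance `μα` towards `z` gives `Mg z ≤ g w + (‖p - z‖ - μα)² / (2μ)`.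
The difference of the two quadratic terms is `α ‖p - z‖ - μα²/2`, and `g`, being convex hence
continuous, is bounded on the bounded set containing `p` and `w`; since `‖z‖ ≤ ‖p - z‖ + ‖p‖`,
this is a linear lower bound in `‖z‖`.
-/

open Metric

theorem exists_dist_le_norm_sub_sq_le {E : Type*} [NormedAddCommGroup E] [NormedSpace ℝ E]
    (p z : E) {δ : ℝ} (hδ : 0 ≤ δ) :
    ∃ w, dist w p ≤ δ ∧ ‖w - z‖ ^ 2 ≤ (‖p - z‖ - δ) ^ 2 := by
  rcases eq_or_ne p z with rfl | hpz
  · exact ⟨p, by simpa using hδ, by simp [sq_nonneg]⟩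
  have hd : 0 < ‖p - z‖ := norm_pos_iff.mpr (sub_ne_zero.mpr hpz)
  refine ⟨p - (δ / ‖p - z‖) • (p - z), ?_, ?_⟩
  · rw [dist_eq_norm, sub_sub_cancel_left, norm_neg, norm_smul, Real.norm_of_nonneg (by positivity),
      div_mul_cancel₀ _ hd.ne']
  · have hw : p - (δ / ‖p - z‖) • (p - z) - z = (1 - δ / ‖p - z‖) • (p - z) := by module
    rw [hw, norm_smul, mul_pow, Real.norm_eq_abs, sq_abs, ← mul_pow, sub_mul,
      div_mul_cancel₀ _ hd.ne', one_mul]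

section Moreau

variable {n : ℕ} {φ : En n → EReal} {g : En n → ℝ} {μ : ℝ} {Mφ Mg : En n → ℝ}
  {xφ xg : En n → En n}

theorem IsMoreau.prox_ne_top (h : IsMoreau φ μ Mφ xφ) (z : En n) : φ (xφ z) ≠ ⊤ := by
  intro htop
  have := (h z).1
  rw [htop, EReal.top_add_coe] at this
  exact EReal.coe_ne_top _ this

theorem IsMoreau.le_of_coe_le {ψ : En n → ℝ} (h : IsMoreau φ μ Mφ xφ)
    (hψ : ∀ x, (ψ x : EReal) ≤ φ x) (z : En n) :
    ψ (xφ z) + ‖xφ z - z‖ ^ 2 / (2 * μ) ≤ Mφ z := by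
  have := add_le_add_left (hψ (xφ z)) ((‖xφ z - z‖ ^ 2 / (2 * μ) : ℝ) : EReal)
  rw [← (h z).1, ← EReal.coe_add] at this
  exact_mod_cast this

theorem IsMoreauR.exists_le_sub_sq (h : IsMoreauR g μ Mg xg) (hμ : 0 < μ) (p z : En n)
    {δ : ℝ} (hδ : 0 ≤ δ) :
    ∃ w, dist w p ≤ δ ∧ Mg z ≤ g w + (‖p - z‖ - δ) ^ 2 / (2 * μ) := by
  obtain ⟨w, hwp, hwz⟩ := exists_dist_le_norm_sub_sq_le p z hδ
  refine ⟨w, hwp, (h z).2.1 w |>.trans ?_⟩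
  gcongr

theorem moreau_sub_moreauR_ge (hφ : IsMoreau φ μ Mφ xφ) (hg : IsMoreauR g μ Mg xg)
    (hμ : 0 < μ) {c : ℝ} (hlow : ∀ x, ((c + g x : ℝ) : EReal) ≤ φ x) (z : En n)
    {α : ℝ} (hα : 0 ≤ α) :
    ∃ w, dist w (xφ z) ≤ μ * α ∧
      c + (g (xφ z) - g w) + α * ‖xφ z - z‖ - μ * α ^ 2 / 2 ≤ Mφ z - Mg z := by
  obtain ⟨w, hw, hMg⟩ := hg.exists_le_sub_sq hμ (xφ z) z (mul_nonneg hμ.le hα)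
  refine ⟨w, hw, ?_⟩
  have hMφ := hφ.le_of_coe_le hlow z
  have hquad : ‖xφ z - z‖ ^ 2 / (2 * μ) - (‖xφ z - z‖ - μ * α) ^ 2 / (2 * μ) =
      α * ‖xφ z - z‖ - μ * α ^ 2 / 2 := by
    field_simp
    ring
  linarith

theorem moreau_sub_moreauR_coercive (hφ : IsMoreau φ μ Mφ xφ) (hg : IsMoreauR g μ Mg xg)
    (hμ : 0 < μ) (hgc : Continuous g) {c : ℝ} (hlow : ∀ x, ((c + g x : ℝ) : EReal) ≤ φ x)
    {R : ℝ} (hR : ∀ z, ‖xφ z‖ ≤ R) {α : ℝ} (hα : 0 < α) :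
    ∃ r, ∀ z, α * ‖z‖ + r ≤ Mφ z - Mg z := by
  obtain ⟨C, hC⟩ := (isCompact_closedBall (0 : En n) (R + μ * α)).exists_bound_of_continuousOn
    hgc.continuousOn
  refine ⟨c - 2 * C - α * R - μ * α ^ 2 / 2, fun z => ?_⟩
  obtain ⟨w, hw, hF⟩ := moreau_sub_moreauR_ge hφ hg hμ hlow z hα.le
  have hμα : 0 < μ * α := mul_pos hμ hα
  have hgp := abs_le.mp (hC (xφ z) (mem_closedBall_zero_iff.mpr (by linarith [hR z])))
  have hgw := abs_le.mp (hC w (mem_closedBall_zero_iff.mpr (by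
    linarith [norm_le_norm_add_norm_sub' w (xφ z), dist_eq_norm w (xφ z), hR z])))
  have hz : ‖z‖ ≤ ‖xφ z - z‖ + R := by
    linarith [norm_le_norm_add_norm_sub' z (xφ z), norm_sub_rev z (xφ z), hR z]
  linarith [mul_le_mul_of_nonneg_left hz hα.le]

theorem levelBoundedR_of_linear_le {H : En n → ℝ} {α r : ℝ} (hα : 0 < α)
    (h : ∀ z, α * ‖z‖ + r ≤ H z) : LevelBoundedR H := by
  intro β
  refine isBounded_closedBall (x := (0 : En n)) (r := (β - r) / α) |>.subset fun z hz => ?_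
  rw [mem_closedBall_zero_iff, le_div_iff₀ hα]
  have : H z ≤ β := hz
  linarith [h z]

end Moreau

theorem stmt11_general {n : ℕ} (φ : En n → EReal) (g : En n → ℝ) (μ : ℝ)
    (hg : ConvexOn ℝ Set.univ g)
    (hμ : 0 < μ)
    (Fstar : ℝ)
    (hmin : ∃ xs : En n, φ xs - ((g xs : ℝ) : EReal) = (Fstar : EReal) ∧
      ∀ x, (Fstar : EReal) ≤ φ x - ((g x : ℝ) : EReal))
    (Mφ : En n → ℝ) (xφ : En n → En n) (hφprox : IsMoreau φ μ Mφ xφ)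
    (Mg : En n → ℝ) (xg : En n → En n) (hgprox : IsMoreauR g μ Mg xg)
    (hdom : IsCompact {x : En n | φ x ≠ ⊤}) :
    (∀ α : ℝ, 0 < α → ∃ r : ℝ, ∀ z : En n, α * ‖z‖ + r ≤ Mφ z - Mg z) ∧
    LevelBoundedR (fun z => Mφ z - Mg z) := by
  obtain ⟨-, -, hFstar⟩ := hmin
  have hlow : ∀ x, ((Fstar + g x : ℝ) : EReal) ≤ φ x := fun x => by
    rw [EReal.coe_add, ← EReal.le_sub_iff_add_le (.inl (EReal.coe_ne_bot _))
      (.inl (EReal.coe_ne_top _))]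
    exact hFstar x
  obtain ⟨R, hR⟩ := hdom.isBounded.subset_closedBall (0 : En n)
  have hproxR : ∀ z, ‖xφ z‖ ≤ R := fun z =>
    mem_closedBall_zero_iff.mp (hR (hφprox.prox_ne_top z))
  have hgc : Continuous g := continuousOn_univ.mp (hg.continuousOn isOpen_univ)
  have hcoercive : ∀ α : ℝ, 0 < α → ∃ r : ℝ, ∀ z : En n, α * ‖z‖ + r ≤ Mφ z - Mg z :=
    fun α hα => moreau_sub_moreauR_coercive hφprox hgprox hμ hgc hlow hproxR hα
  obtain ⟨r, hr⟩ := hcoercive 1 one_pos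
  exact ⟨hcoercive, levelBoundedR_of_linear_le one_pos hr⟩

/-- if `dom φ` is compact then `F_μ` is coercive, and in particular
level-bounded. -/
theorem stmt11 {n : ℕ} (φ : En n → EReal) (g : En n → ℝ) (mφ μ : ℝ)
    (hproper : ProperE φ) (hlsc : LowerSemicontinuous φ)
    (hmφ : 0 ≤ mφ) (hweak : WeaklyConvexOn φ mφ)
    (hg : ConvexOn ℝ Set.univ g)
    (hμ : 0 < μ) (hμm : μ * mφ < 1)
    (Fstar : ℝ)
    (hmin : ∃ xs : En n, φ xs - ((g xs : ℝ) : EReal) = (Fstar : EReal) ∧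
      ∀ x, (Fstar : EReal) ≤ φ x - ((g x : ℝ) : EReal))
    (Mφ : En n → ℝ) (xφ : En n → En n) (hφprox : IsMoreau φ μ Mφ xφ)
    (Mg : En n → ℝ) (xg : En n → En n) (hgprox : IsMoreauR g μ Mg xg)
    (hdom : IsCompact {x : En n | φ x ≠ ⊤}) :
    (∀ α : ℝ, 0 < α → ∃ r : ℝ, ∀ z : En n, α * ‖z‖ + r ≤ Mφ z - Mg z) ∧
    LevelBoundedR (fun z => Mφ z - Mg z) :=
  stmt11_general φ g μ hg hμ Fstar hmin Mφ xφ hφprox Mg xg hgprox hdom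
end
end

section
/- Let 0 < μ < 1/m_φ, assume F attains a finite minimal value F*, and set L_{F_μ} = (2 − μ m_φ)/(μ − μ² m_φ) if m_φ > 0 and L_{F_μ} = 2/μ if m_φ = 0. Fix a stepsize 0 < α ≤ 1/L_{F_μ}, an initial point z⁰ ∈ ℝⁿ, and the gradient descent iterates z^{k+1} = z^k − α ∇F_μ(z^k) = z^k − (α/μ)(x_{μg}(z^k) − x_{μφ}(z^k)). Define ξ^k = (x_{μg}(z^k) − x_{μφ}(z^k))/μ. Then for every integer K ≥ 1 there exists k̄ ∈ {0, …, K−1} such that (z^{k̄} − x_{μφ}(z^{k̄}))/μ ∈ ∂φ(x_{μφ}(z^{k̄})), (z^{k̄} − x_{μg}(z^{k̄}))/μ ∈ ∂g(x_{μg}(z^{k̄})) (so ξ^{k̄} ∈ ∂φ(x_{μφ}(z^{k̄})) − ∂g(x_{μg}(z^{k̄}))), and max{ ‖ξ^{k̄}‖, ‖x_{μg}(z^{k̄}) − x_{μφ}(z^{k̄})‖ } ≤ max{1, 1/μ} · ( 2μ² (F_μ(z⁰) − F*) / (α K) )^{1/2}. -/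
open scoped RealInnerProductSpace

noncomputable section

lemma limit_aux (a b C : ℝ) (h : ∀ t : ℝ, 0 < t → t ≤ 1 → a ≤ b + t * C) : a ≤ b := by
  by_contra hc
  push_neg at hc
  rcases le_or_gt C 0 with hC | hC
  · have := h 1 one_pos le_rfl; nlinarith
  · have hab : 0 < a - b := by linarith
    have ht0 : 0 < min 1 ((a - b) / (2 * C)) := by
      apply lt_min one_pos; positivity
    have := h _ ht0 (min_le_left _ _)
    have h2 : min 1 ((a - b) / (2 * C)) ≤ (a - b) / (2 * C) := min_le_right _ _
    have h3 : min 1 ((a - b) / (2 * C)) * C ≤ (a - b) / (2 * C) * C :=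
      mul_le_mul_of_nonneg_right h2 hC.le
    have h4 : (a - b) / (2 * C) * C = (a - b) / 2 := by field_simp
    nlinarith

lemma ereal_cases (x : EReal) : x = ⊥ ∨ x = ⊤ ∨ ∃ r : ℝ, x = (r : EReal) := by
  induction x using EReal.rec with
  | bot => exact Or.inl rfl
  | coe r => exact Or.inr (Or.inr ⟨r, rfl⟩)
  | top => exact Or.inr (Or.inl rfl)

lemma helper_g (A D B p q n0 t μ : ℝ) (hμ : 0 < μ) (ht0 : 0 < t)
    (hconv : D ≤ (1 - t) * A + t * B)
    (hmin2 : A + n0 / (2*μ) ≤ D + (n0 + 2*(t*p) + t^2*q) / (2*μ)) :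
    A + μ⁻¹ * -p ≤ B + t * (q / (2*μ)) := by
  have e : (n0 + 2*(t*p) + t^2*q)/(2*μ) - n0/(2*μ)
      = t*(p*μ⁻¹) + t*(t*(q*μ⁻¹)/2) := by field_simp; ring
  have h5 : t*(A - B - p*μ⁻¹ - t*(q*μ⁻¹)/2) ≤ 0 := by nlinarith [hconv, hmin2, e]
  have h6 : A - B - p*μ⁻¹ - t*(q*μ⁻¹)/2 ≤ 0 := by
    by_contra hcon; push_neg at hcon; nlinarith [mul_pos ht0 hcon]
  have e2 : t * (q/(2*μ)) = t*(q*μ⁻¹)/2 := by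
    rw [div_eq_mul_inv, mul_inv]; ring
  rw [e2]; linarith

lemma helper_phi (P D B X Y p r q n0 m t μ : ℝ) (hμ : 0 < μ) (ht0 : 0 < t)
    (hm : 0 ≤ m) (hq : 0 ≤ q)
    (hwc : D + m/2 * (X + 2*(t*r) + t^2*q)
      ≤ (1 - t) * ((P - n0/(2*μ)) + m/2 * X) + t * (B + m/2 * Y))
    (hmin2 : P ≤ D + (n0 + 2*(t*p) + t^2*q)/(2*μ)) :
    (P - n0/(2*μ)) + (m/2 * X + (μ⁻¹ * -p + m * r)) ≤ B + m/2 * Y + t * (q/(2*μ)) := by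
  have e : (n0 + 2*(t*p) + t^2*q)/(2*μ) - n0/(2*μ)
      = t*(p*μ⁻¹) + t*(t*(q*μ⁻¹)/2) := by field_simp; ring
  have h5 : t*((P - n0/(2*μ)) + m/2*X + m*r - B - m/2*Y - p*μ⁻¹
      - t*(q*μ⁻¹)/2 + t*(m/2)*q) ≤ 0 := by nlinarith [hwc, hmin2, e]
  have h6 : (P - n0/(2*μ)) + m/2*X + m*r - B - m/2*Y - p*μ⁻¹
      - t*(q*μ⁻¹)/2 + t*(m/2)*q ≤ 0 := by
    by_contra hcon; push_neg at hcon; nlinarith [mul_pos ht0 hcon]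
  have e2 : t * (q/(2*μ)) = t*(q*μ⁻¹)/2 := by rw [div_eq_mul_inv, mul_inv]; ring
  have hpos : 0 ≤ t*(m/2)*q := by positivity
  rw [e2]; linarith

lemma helper_mgc (gw gw' nu nu' i1 T μ : ℝ) (hμ : 0 < μ)
    (hsg : gw + (μ⁻¹ * (nu - i1) + T) ≤ gw')
    (hnn : 0 ≤ μ⁻¹ * (nu' - 2*i1 + nu)) :
    (gw + nu/(2*μ)) + T ≤ gw' + nu'/(2*μ) := by
  have e : ∀ x : ℝ, x/(2*μ) = x*μ⁻¹/2 := fun x => by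
    rw [div_eq_mul_inv, mul_inv]; ring
  rw [e, e]
  nlinarith [hsg, hnn]

lemma helper_desc (Ma' Mb' Ma Mb p1 p2 S n0 α μ : ℝ) (hμ : 0 < μ) (hα0 : 0 < α)
    (hαμ : α ≤ μ) (hS : 0 ≤ S)
    (ha : Ma' ≤ (Ma - n0/(2*μ)) + (n0 + 2*((α*μ⁻¹)*p1) + (α*μ⁻¹)^2*S)/(2*μ))
    (hb : Mb + (α*μ⁻¹*μ⁻¹)*p2 ≤ Mb')
    (hps : p1 - p2 = -S) :
    Ma' - Mb' + (α/2)*(μ⁻¹^2*S) ≤ Ma - Mb := by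
  have hμi : (0:ℝ) < μ⁻¹ := inv_pos.mpr hμ
  have e : (n0 + 2*((α*μ⁻¹)*p1) + (α*μ⁻¹)^2*S)/(2*μ) - n0/(2*μ)
      = α*μ⁻¹^2*p1 + α^2*μ⁻¹^3*S/2 := by field_simp; ring
  have hps2 : α*μ⁻¹^2*p1 - α*μ⁻¹^2*p2 = -(α*μ⁻¹^2*S) := by
    rw [← mul_sub, hps]; ring
  have h1 : α*μ⁻¹ ≤ 1 := by
    have h := mul_le_mul_of_nonneg_right hαμ hμi.le
    rwa [mul_inv_cancel₀ (ne_of_gt hμ)] at h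
  have hq := mul_le_mul_of_nonneg_right h1
    (show (0:ℝ) ≤ α*μ⁻¹^2*S/2 by positivity)
  nlinarith [ha, hb, e, hps2, hq]

lemma helper_max (dn r M μ : ℝ) (h0 : 0 ≤ dn) (hr : dn ≤ r)
    (h1m : 1 ≤ M*μ) (h2m : 1 ≤ M) (hμ : 0 < μ) : max dn (μ*dn) ≤ M*(μ*r) := by
  have hr0 : 0 ≤ r := le_trans h0 hr
  apply max_le
  · nlinarith [mul_nonneg (by linarith : (0:ℝ) ≤ M*μ - 1) hr0]
  · nlinarith [mul_nonneg (by linarith : (0:ℝ) ≤ M - 1) (mul_nonneg hμ.le hr0),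
      mul_le_mul_of_nonneg_left hr hμ.le]

set_option maxHeartbeats 1000000 in
/-- convergence of gradient descent `z^{k+1} = z^k − α ∇F_μ(z^k)` on
the smoothed function `F_μ = M_{μφ} − M_{μg}`. -/
theorem stmt13 {n : ℕ} (φ : En n → EReal) (g : En n → ℝ) (mφ μ : ℝ)
    (hproper : ProperE φ) (hlsc : LowerSemicontinuous φ)
    (hmφ : 0 ≤ mφ) (hweak : WeaklyConvexOn φ mφ)
    (hg : ConvexOn ℝ Set.univ g)
    (hμ : 0 < μ) (hμm : μ * mφ < 1)
    (Fstar : ℝ)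
    (hmin : ∃ xs : En n, φ xs - ((g xs : ℝ) : EReal) = (Fstar : EReal) ∧
      ∀ x, (Fstar : EReal) ≤ φ x - ((g x : ℝ) : EReal))
    (Mφ : En n → ℝ) (xφ : En n → En n) (hφprox : IsMoreau φ μ Mφ xφ)
    (Mg : En n → ℝ) (xg : En n → En n) (hgprox : IsMoreauR g μ Mg xg)
    (LFμ α : ℝ)
    (hLF : LFμ = if mφ = 0 then 2 / μ else (2 - μ * mφ) / (μ - μ ^ 2 * mφ))
    (hα0 : 0 < α) (hα1 : α ≤ 1 / LFμ)
    (z : ℕ → En n)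
    (hz : ∀ k : ℕ, z (k + 1) = z k - α • (μ⁻¹ • (xg (z k) - xφ (z k)))) :
    ∀ K : ℕ, 1 ≤ K → ∃ kb < K,
      WeakSubgradAt φ mφ (μ⁻¹ • (z kb - xφ (z kb))) (xφ (z kb)) ∧
      ConvexSubgradAt g (μ⁻¹ • (z kb - xg (z kb))) (xg (z kb)) ∧
      max ‖μ⁻¹ • (xg (z kb) - xφ (z kb))‖ ‖xg (z kb) - xφ (z kb)‖ ≤
        max 1 μ⁻¹ * Real.sqrt (2 * μ ^ 2 * ((Mφ (z 0) - Mg (z 0)) - Fstar) / (α * K)) := by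
  intro K hK
  have hμne : μ ≠ 0 := ne_of_gt hμ
  have hμi : (0:ℝ) < μ⁻¹ := inv_pos.mpr hμ
  -- α ≤ μ
  have hαμ : α ≤ μ := by
    rcases eq_or_lt_of_le hmφ with hm0 | hm0
    · rw [hLF, if_pos hm0.symm, one_div_div] at hα1
      linarith
    · rw [hLF, if_neg (ne_of_gt hm0), one_div_div] at hα1
      have hden : 0 < 2 - μ * mφ := by linarith
      have hα1' : α * (2 - μ * mφ) ≤ μ - μ ^ 2 * mφ := (le_div_iff₀ hden).mp hα1
      nlinarith
  -- φ (xφ w) is real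
  have hpφ : ∀ w : En n, φ (xφ w) = ((Mφ w - ‖xφ w - w‖ ^ 2 / (2 * μ) : ℝ) : EReal) := by
    intro w
    obtain ⟨h1, _, _⟩ := hφprox w
    rcases ereal_cases (φ (xφ w)) with hb | ht | ⟨r, hr⟩
    · exact absurd hb (hproper.2 _)
    · rw [ht] at h1; simp at h1
    · rw [hr] at h1 ⊢
      norm_cast at h1 ⊢
      linarith
  -- g subgradient at prox point
  have hsubg : ∀ w : En n, ConvexSubgradAt g (μ⁻¹ • (w - xg w)) (xg w) := by
    intro w y
    obtain ⟨h1, h2, _⟩ := hgprox w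
    apply limit_aux _ _ (‖y - xg w‖ ^ 2 / (2 * μ))
    intro t ht0 ht1
    set v := y - xg w with hv
    have hxt : (1 - t) • (xg w) + t • y = xg w + t • v := by module
    have hconv := hg.2 (Set.mem_univ (xg w)) (Set.mem_univ y)
      (by linarith : (0:ℝ) ≤ 1 - t) ht0.le (by ring)
    rw [hxt] at hconv
    simp only [smul_eq_mul] at hconv
    have hmin2 := h2 (xg w + t • v)
    rw [h1] at hmin2
    have hsplit : xg w + t • v - w = (xg w - w) + t • v := by abel
    have hexp : ‖xg w + t • v - w‖ ^ 2
        = ‖xg w - w‖ ^ 2 + 2 * (t * ⟪xg w - w, v⟫) + t ^ 2 * ‖v‖ ^ 2 := by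
      rw [hsplit, norm_add_sq_real, real_inner_smul_right, norm_smul]
      rw [Real.norm_eq_abs, abs_of_pos ht0]
      ring
    rw [hexp] at hmin2
    have hip : ⟪μ⁻¹ • (w - xg w), v⟫ = μ⁻¹ * ⟪w - xg w, v⟫ := real_inner_smul_left _ _ _
    have hip2 : ⟪w - xg w, v⟫ = -⟪xg w - w, v⟫ := by
      have h : w - xg w = -(xg w - w) := by abel
      rw [h, inner_neg_left]
    rw [hip, hip2]
    have hfin := helper_g (g (xg w)) (g (xg w + t • v)) (g y) ⟪xg w - w, v⟫
      (‖v‖^2) (‖xg w - w‖^2) t μ hμ ht0 (by linarith [hconv]) (by linarith [hmin2])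
    linarith [hfin]
  -- φ weak subgradient at prox point
  have hsubφ : ∀ w : En n, WeakSubgradAt φ mφ (μ⁻¹ • (w - xφ w)) (xφ w) := by
    intro w y
    rcases ereal_cases (φ y) with hb | ht | ⟨B, hB⟩
    · exact absurd hb (hproper.2 y)
    · rw [ht, EReal.top_add_coe]
      exact le_top
    · rw [hpφ w, hB]
      norm_cast
      apply limit_aux _ _ (‖y - xφ w‖ ^ 2 / (2 * μ))
      intro t ht0 ht1
      set v := y - xφ w with hv
      have hxt : (1 - t) • (xφ w) + t • y = xφ w + t • v := by module
      have hwc := hweak (xφ w) y (1 - t) t (by linarith) ht0.le (by ring)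
      rw [hxt, hpφ w, hB] at hwc
      have hmin2 := (hφprox w).2.1 (xφ w + t • v)
      obtain ⟨D, hD⟩ : ∃ D : ℝ, φ (xφ w + t • v) = (D : EReal) := by
        rcases ereal_cases (φ (xφ w + t • v)) with hb' | ht' | h
        · exact absurd hb' (hproper.2 _)
        · exfalso
          rw [ht', EReal.top_add_coe] at hwc
          push_cast at hwc
          exact (EReal.coe_lt_top _).not_ge hwc
        · exact h
      rw [hD] at hwc hmin2
      norm_cast at hwc hmin2
      have hsplit : xφ w + t • v - w = (xφ w - w) + t • v := by abel
      have hexp1 : ‖xφ w + t • v - w‖ ^ 2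
          = ‖xφ w - w‖ ^ 2 + 2 * (t * ⟪xφ w - w, v⟫) + t ^ 2 * ‖v‖ ^ 2 := by
        rw [hsplit, norm_add_sq_real, real_inner_smul_right, norm_smul]
        rw [Real.norm_eq_abs, abs_of_pos ht0]
        ring
      have hexp2 : ‖xφ w + t • v‖ ^ 2
          = ‖xφ w‖ ^ 2 + 2 * (t * ⟪xφ w, v⟫) + t ^ 2 * ‖v‖ ^ 2 := by
        rw [norm_add_sq_real, real_inner_smul_right, norm_smul]
        rw [Real.norm_eq_abs, abs_of_pos ht0]
        ring
      rw [hexp1] at hmin2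
      rw [hexp2] at hwc
      have hip : ⟪μ⁻¹ • (w - xφ w) + mφ • xφ w, v⟫
          = μ⁻¹ * (-⟪xφ w - w, v⟫) + mφ * ⟪xφ w, v⟫ := by
        rw [inner_add_left, real_inner_smul_left, real_inner_smul_left]
        have h : w - xφ w = -(xφ w - w) := by abel
        rw [h, inner_neg_left]
      rw [hip]
      have hfin := helper_phi (Mφ w) D B (‖xφ w‖^2) (‖y‖^2) ⟪xφ w - w, v⟫
        ⟪xφ w, v⟫ (‖v‖^2) (‖xφ w - w‖^2) mφ t μ hμ ht0 hmφ (sq_nonneg _)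
        (by linarith [hwc]) (by linarith [hmin2])
      linarith [hfin]
  -- convexity of Mg (subgradient inequality)
  have hMgc : ∀ w w' : En n, Mg w + ⟪μ⁻¹ • (w - xg w), w' - w⟫ ≤ Mg w' := by
    intro w w'
    have h1 := (hgprox w).1
    have h1' := (hgprox w').1
    have hsg := hsubg w (xg w')
    have hid : xg w' - xg w = ((xg w' - w') - (xg w - w)) + (w' - w) := by abel
    rw [hid, inner_add_right] at hsg
    have hi1 : ⟪μ⁻¹ • (w - xg w), (xg w' - w') - (xg w - w)⟫
        = μ⁻¹ * (‖xg w - w‖ ^ 2 - ⟪xg w - w, xg w' - w'⟫) := by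
      rw [real_inner_smul_left]
      have h : w - xg w = -(xg w - w) := by abel
      rw [h, inner_neg_left, inner_sub_right, real_inner_self_eq_norm_sq]
      ring
    rw [hi1] at hsg
    have hnn : 0 ≤ μ⁻¹ * (‖xg w' - w'‖ ^ 2 - 2 * ⟪xg w - w, xg w' - w'⟫ + ‖xg w - w‖ ^ 2) := by
      have hnorm : ‖(xg w' - w') - (xg w - w)‖ ^ 2
          = ‖xg w' - w'‖ ^ 2 - 2 * ⟪xg w - w, xg w' - w'⟫ + ‖xg w - w‖ ^ 2 := by
        rw [norm_sub_sq_real, real_inner_comm]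
      rw [← hnorm]
      positivity
    rw [h1, h1']
    exact helper_mgc (g (xg w)) (g (xg w')) (‖xg w - w‖^2) (‖xg w' - w'‖^2)
      (⟪xg w - w, xg w' - w'⟫) _ μ hμ hsg hnn
  -- lower bound
  have hlow : ∀ w : En n, Fstar ≤ Mφ w - Mg w := by
    intro w
    obtain ⟨xs, hxs, hlb⟩ := hmin
    have h := hlb (xφ w)
    rw [hpφ w, ← EReal.coe_sub] at h
    norm_cast at h
    have hg2 := (hgprox w).2.1 (xφ w)
    linarith
  -- descent inequality
  have hdesc : ∀ k : ℕ, Mφ (z (k+1)) - Mg (z (k+1))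
      + (α/2) * ‖μ⁻¹ • (xg (z k) - xφ (z k))‖ ^ 2 ≤ Mφ (z k) - Mg (z k) := by
    intro k
    have hw' : z (k+1) = z k - (α * μ⁻¹) • (xg (z k) - xφ (z k)) := by
      rw [hz k, smul_smul]
    have ha := (hφprox (z (k+1))).2.1 (xφ (z k))
    rw [hpφ (z k)] at ha
    norm_cast at ha
    have hαμi : 0 < α * μ⁻¹ := mul_pos hα0 hμi
    have hexp : ‖xφ (z k) - z (k+1)‖ ^ 2 = ‖xφ (z k) - z k‖ ^ 2
        + 2 * ((α * μ⁻¹) * ⟪xφ (z k) - z k, xg (z k) - xφ (z k)⟫)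
        + (α * μ⁻¹) ^ 2 * ‖xg (z k) - xφ (z k)‖ ^ 2 := by
      have hdiff : xφ (z k) - z (k+1)
          = (xφ (z k) - z k) + (α * μ⁻¹) • (xg (z k) - xφ (z k)) := by
        rw [hw']; module
      rw [hdiff, norm_add_sq_real, real_inner_smul_right, norm_smul]
      rw [Real.norm_eq_abs, abs_of_pos hαμi]
      ring
    rw [hexp] at ha
    have hb := hMgc (z k) (z (k+1))
    have hi3 : ⟪μ⁻¹ • (z k - xg (z k)), z (k+1) - z k⟫
        = (α * μ⁻¹ * μ⁻¹) * ⟪xg (z k) - z k, xg (z k) - xφ (z k)⟫ := by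
      have h : z (k+1) - z k = -((α * μ⁻¹) • (xg (z k) - xφ (z k))) := by
        rw [hw']; module
      rw [h, inner_neg_right, real_inner_smul_left, real_inner_smul_right]
      have h2 : z k - xg (z k) = -(xg (z k) - z k) := by abel
      rw [h2, inner_neg_left]
      ring
    rw [hi3] at hb
    have hps : ⟪xφ (z k) - z k, xg (z k) - xφ (z k)⟫
        - ⟪xg (z k) - z k, xg (z k) - xφ (z k)⟫ = -‖xg (z k) - xφ (z k)‖ ^ 2 := by
      rw [← inner_sub_left]
      have h : (xφ (z k) - z k) - (xg (z k) - z k) = -(xg (z k) - xφ (z k)) := by module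
      rw [h, inner_neg_left, real_inner_self_eq_norm_sq]
    have hnd : ‖μ⁻¹ • (xg (z k) - xφ (z k))‖ ^ 2 = μ⁻¹ ^ 2 * ‖xg (z k) - xφ (z k)‖ ^ 2 := by
      rw [norm_smul, Real.norm_eq_abs, abs_of_pos hμi]; ring
    rw [hnd]
    have hfin := helper_desc (Mφ (z (k+1))) (Mg (z (k+1))) (Mφ (z k)) (Mg (z k))
      (⟪xφ (z k) - z k, xg (z k) - xφ (z k)⟫) (⟪xg (z k) - z k, xg (z k) - xφ (z k)⟫)
      (‖xg (z k) - xφ (z k)‖^2) (‖xφ (z k) - z k‖^2) α μ hμ hα0 hαμ (sq_nonneg _)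
      (by linarith [ha]) (by linarith [hb]) hps
    linarith [hfin]
  -- summation
  have hKpos : (0:ℝ) < (K:ℝ) := by exact_mod_cast Nat.lt_of_lt_of_le Nat.zero_lt_one hK
  have hΔ0 : 0 ≤ Mφ (z 0) - Mg (z 0) - Fstar := by linarith [hlow (z 0)]
  have hsum : ∑ k ∈ Finset.range K, (α/2) * ‖μ⁻¹ • (xg (z k) - xφ (z k))‖ ^ 2
      ≤ Mφ (z 0) - Mg (z 0) - Fstar := by
    have h1 : ∀ k ∈ Finset.range K, (α/2) * ‖μ⁻¹ • (xg (z k) - xφ (z k))‖ ^ 2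
        ≤ (Mφ (z k) - Mg (z k)) - (Mφ (z (k+1)) - Mg (z (k+1))) :=
      fun k _ => by linarith [hdesc k]
    calc ∑ k ∈ Finset.range K, (α/2) * ‖μ⁻¹ • (xg (z k) - xφ (z k))‖ ^ 2
        ≤ ∑ k ∈ Finset.range K,
            ((Mφ (z k) - Mg (z k)) - (Mφ (z (k+1)) - Mg (z (k+1)))) :=
          Finset.sum_le_sum h1
      _ = (Mφ (z 0) - Mg (z 0)) - (Mφ (z K) - Mg (z K)) :=
          Finset.sum_range_sub' (fun k => Mφ (z k) - Mg (z k)) K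
      _ ≤ Mφ (z 0) - Mg (z 0) - Fstar := by linarith [hlow (z K)]
  have hsum2 : ∑ k ∈ Finset.range K, ‖μ⁻¹ • (xg (z k) - xφ (z k))‖ ^ 2
      ≤ ∑ _k ∈ Finset.range K, 2 * (Mφ (z 0) - Mg (z 0) - Fstar) / (α * K) := by
    rw [Finset.sum_const, Finset.card_range, nsmul_eq_mul]
    have e3 : (K:ℝ) * (2 * (Mφ (z 0) - Mg (z 0) - Fstar) / (α * K))
        = 2 * (Mφ (z 0) - Mg (z 0) - Fstar) / α := by
      field_simp
    have h2 : (α/2) * ∑ k ∈ Finset.range K, ‖μ⁻¹ • (xg (z k) - xφ (z k))‖ ^ 2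
        ≤ Mφ (z 0) - Mg (z 0) - Fstar := by
      rw [Finset.mul_sum]; exact hsum
    rw [e3, le_div_iff₀ hα0]
    linarith [h2]
  obtain ⟨kb, hkb, hbb⟩ := Finset.exists_le_of_sum_le
    ⟨0, Finset.mem_range.mpr (by omega)⟩ hsum2
  refine ⟨kb, Finset.mem_range.mp hkb, hsubφ (z kb), hsubg (z kb), ?_⟩
  have hc0 : 0 ≤ 2 * (Mφ (z 0) - Mg (z 0) - Fstar) / (α * K) := by positivity
  have hr : ‖μ⁻¹ • (xg (z kb) - xφ (z kb))‖
      ≤ Real.sqrt (2 * (Mφ (z 0) - Mg (z 0) - Fstar) / (α * K)) :=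
    (Real.le_sqrt (norm_nonneg _) hc0).mpr hbb
  have hsqrt_eq : Real.sqrt (2 * μ ^ 2 * ((Mφ (z 0) - Mg (z 0)) - Fstar) / (α * K))
      = μ * Real.sqrt (2 * (Mφ (z 0) - Mg (z 0) - Fstar) / (α * K)) := by
    rw [show 2 * μ ^ 2 * ((Mφ (z 0) - Mg (z 0)) - Fstar) / (α * K)
        = μ ^ 2 * (2 * (Mφ (z 0) - Mg (z 0) - Fstar) / (α * K)) by ring,
      Real.sqrt_mul (sq_nonneg μ), Real.sqrt_sq hμ.le]
  rw [hsqrt_eq]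
  have hsn : ‖xg (z kb) - xφ (z kb)‖ = μ * ‖μ⁻¹ • (xg (z kb) - xφ (z kb))‖ := by
    rw [norm_smul, Real.norm_eq_abs, abs_of_pos hμi, ← mul_assoc,
      mul_inv_cancel₀ hμne, one_mul]
  rw [hsn]
  have h1m : 1 ≤ max 1 μ⁻¹ * μ := by
    have h := le_max_right 1 μ⁻¹
    calc (1:ℝ) = μ⁻¹ * μ := (inv_mul_cancel₀ hμne).symm
      _ ≤ max 1 μ⁻¹ * μ := mul_le_mul_of_nonneg_right h hμ.le
  exact helper_max _ _ _ _ (norm_nonneg _) hr h1m (le_max_left _ _) hμ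

end
end
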